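/- arXiv:0805.3561 — 10 statements merged into one kernel-verified Lean document; each statement's English description precedes it below -/
import Mathlib

section
/- Let φ : ℚ[y1,y4] → ℚ[y1,y4] be the ℚ-algebra endomorphism determined by φ(y1) = k*y1 and φ(y4) = a*y1^4 + b*y4, where k, a, b ∈ ℚ. If φ(g8) ∈ I and φ(g12) ∈ I (i.e. φ maps the ideal I into itself), then a = 0 and b = k^4. (This is the rigidity computation for X = F4/C3·S1: every degree-preserving endomorphism of H*(X;ℚ) sending the Kaehlerian class y1 to k*y1 is the Adams operator ψ^k.) -/
open MvPolynomial

/-!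
Grade `ℚ[y₁, y₄]` by `deg y₁ = 1`, `deg y₄ = 4`. The substitution `φ` preserves this grading and
`I` is generated by forms of degrees 8 and 12, so `φ(g₈) = c • g₈` and
`φ(g₁₂) = (α y₁⁴ + β y₄) g₈ + c' • g₁₂`. Evaluating these identities at a few points gives
polynomial equations in `k⁴, a, b`: the first leaves `b = 0`, or `b = k⁴ - 4a` with `a = 0` or
`k⁴ = 2a`, and the second rules out all of these except `a = 0, b = k⁴`.
-/

namespace MvPolynomial

variable {σ R : Type*} [CommSemiring R]

theorem IsWeightedHomogeneous.map {M : Type*} [AddCommMonoid M] {w : σ → M}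
    {φ : MvPolynomial σ R →ₐ[R] MvPolynomial σ R}
    (hφ : ∀ i, (φ (X i)).IsWeightedHomogeneous w (w i)) {p : MvPolynomial σ R} {n : M}
    (hp : p.IsWeightedHomogeneous w n) : (φ p).IsWeightedHomogeneous w n := by
  induction hp using IsWeightedHomogeneous.induction_on with
  | zero => simpa using isWeightedHomogeneous_zero R w n
  | add p q _ _ hp hq => simpa using hp.add hq
  | monomial d r hr =>
    rw [monomial_eq, map_mul, algHom_C, Finsupp.prod, map_prod, ← hr, Finsupp.weight_apply,
      Finsupp.sum]
    refine .C_mul (.prod _ _ _ fun i _ ↦ ?_) r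
    simpa only [map_pow] using (hφ i).pow (d i)

theorem isWeightedHomogeneous_ofNat {M : Type*} [AddCommMonoid M] (w : σ → M) (n : ℕ)
    [n.AtLeastTwo] : (OfNat.ofNat n : MvPolynomial σ R).IsWeightedHomogeneous w 0 := by
  rw [← map_ofNat C]
  exact isWeightedHomogeneous_C w _

section NatWeight

variable {w : σ → ℕ}

attribute [local instance] weightedGradedAlgebra in
theorem weightedHomogeneousComponent_mul_of_isWeightedHomogeneous {g : MvPolynomial σ R} {m : ℕ}
    (hg : g.IsWeightedHomogeneous w m) (p : MvPolynomial σ R) (n : ℕ) :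
    weightedHomogeneousComponent w n (p * g) =
      if m ≤ n then weightedHomogeneousComponent w (n - m) p * g else 0 := by
  classical
  simp only [← weightedDecomposition.decompose'_apply]
  exact DirectSum.coe_decompose_mul_of_right_mem (weightedHomogeneousSubmodule R w) n hg

theorem IsWeightedHomogeneous.exists_eq_of_mem_span_pair {f g h : MvPolynomial σ R} {n m l : ℕ}
    (hf : f.IsWeightedHomogeneous w n) (hg : g.IsWeightedHomogeneous w m)
    (hh : h.IsWeightedHomogeneous w l) (hfI : f ∈ Ideal.span {g, h}) :
    ∃ p q : MvPolynomial σ R,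
      f = (if m ≤ n then weightedHomogeneousComponent w (n - m) p * g else 0) +
        if l ≤ n then weightedHomogeneousComponent w (n - l) q * h else 0 := by
  obtain ⟨p, q, rfl⟩ := Ideal.mem_span_pair.mp hfI
  refine ⟨p, q, ?_⟩
  rw [← hf.weightedHomogeneousComponent_same, map_add,
    weightedHomogeneousComponent_mul_of_isWeightedHomogeneous hg,
    weightedHomogeneousComponent_mul_of_isWeightedHomogeneous hh]

end NatWeight

theorem IsWeightedHomogeneous.eq_C_mul_X_pow_add_C_mul_X {r : MvPolynomial (Fin 2) R}
    (hr : r.IsWeightedHomogeneous ![1, 4] 4) :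
    r = C (coeff (Finsupp.single 0 4) r) * X 0 ^ 4 + C (coeff (Finsupp.single 1 1) r) * X 1 := by
  ext d
  rw [coeff_add, coeff_C_mul, coeff_C_mul, coeff_X_pow, coeff_X]
  by_cases h04 : Finsupp.single 0 4 = d
  · subst h04
    simp [Finsupp.single_eq_single_iff]
  by_cases h11 : Finsupp.single 1 1 = d
  · subst h11
    simp [Finsupp.single_eq_single_iff]
  simp only [if_neg h04, if_neg h11, mul_zero, add_zero]
  refine hr.coeff_eq_zero d fun hd ↦ ?_
  rw [Finsupp.weight_apply, Finsupp.sum_fintype _ _ (by simp)] at hd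
  simp only [Fin.sum_univ_two, smul_eq_mul, Matrix.cons_val_zero, Matrix.cons_val_one] at hd
  have : d 0 = 4 ∧ d 1 = 0 ∨ d 0 = 0 ∧ d 1 = 1 := by omega
  rcases this with ⟨h0, h1⟩ | ⟨h0, h1⟩
  · exact h04 (Finsupp.ext fun i ↦ by fin_cases i <;> simp [h0, h1])
  · exact h11 (Finsupp.ext fun i ↦ by fin_cases i <;> simp [h0, h1])

end MvPolynomial

namespace F4C3

section Relations

variable {R : Type*} [CommRing R]

noncomputable def rel8 : MvPolynomial (Fin 2) R := 24 * X 1 ^ 2 + X 0 ^ 8 - 12 * X 0 ^ 4 * X 1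

noncomputable def rel12 : MvPolynomial (Fin 2) R :=
  X 0 ^ 12 - 24 * X 0 ^ 8 * X 1 + 144 * X 0 ^ 4 * X 1 ^ 2 - 64 * X 1 ^ 3

theorem weights_ne_zero : ∀ i, (![1, 4] : Fin 2 → ℕ) i ≠ 0 := by decide

theorem isWeightedHomogeneous_X_zero :
    (X 0 : MvPolynomial (Fin 2) R).IsWeightedHomogeneous ![1, 4] 1 :=
  isWeightedHomogeneous_X R _ 0

theorem isWeightedHomogeneous_X_one :
    (X 1 : MvPolynomial (Fin 2) R).IsWeightedHomogeneous ![1, 4] 4 :=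
  isWeightedHomogeneous_X R _ 1

theorem isWeightedHomogeneous_rel8 :
    (rel8 : MvPolynomial (Fin 2) R).IsWeightedHomogeneous ![1, 4] 8 :=
  (((isWeightedHomogeneous_ofNat _ 24).mul (isWeightedHomogeneous_X_one.pow 2)).add
    (isWeightedHomogeneous_X_zero.pow 8)).sub
    (((isWeightedHomogeneous_ofNat _ 12).mul (isWeightedHomogeneous_X_zero.pow 4)).mul
      isWeightedHomogeneous_X_one)

theorem isWeightedHomogeneous_rel12 :
    (rel12 : MvPolynomial (Fin 2) R).IsWeightedHomogeneous ![1, 4] 12 :=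
  ((((isWeightedHomogeneous_X_zero.pow 12).sub
    (((isWeightedHomogeneous_ofNat _ 24).mul (isWeightedHomogeneous_X_zero.pow 8)).mul
      isWeightedHomogeneous_X_one)).add
    (((isWeightedHomogeneous_ofNat _ 144).mul (isWeightedHomogeneous_X_zero.pow 4)).mul
      (isWeightedHomogeneous_X_one.pow 2))).sub
    ((isWeightedHomogeneous_ofNat _ 64).mul (isWeightedHomogeneous_X_one.pow 3)))

theorem eq_C_mul_rel8_of_mem_span {f : MvPolynomial (Fin 2) R}
    (hf : f.IsWeightedHomogeneous ![1, 4] 8) (hfI : f ∈ Ideal.span {rel8, rel12}) :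
    ∃ c, f = C c * rel8 := by
  obtain ⟨p, q, hpq⟩ :=
    hf.exists_eq_of_mem_span_pair isWeightedHomogeneous_rel8 isWeightedHomogeneous_rel12 hfI
  simp only [le_refl, tsub_self, weightedHomogeneousComponent_zero _ weights_ne_zero, if_true,
    (by decide : ¬ 12 ≤ 8), if_false, add_zero] at hpq
  exact ⟨_, hpq⟩

theorem exists_eq_add_C_mul_rel12_of_mem_span {f : MvPolynomial (Fin 2) R}
    (hf : f.IsWeightedHomogeneous ![1, 4] 12) (hfI : f ∈ Ideal.span {rel8, rel12}) :
    ∃ α β c, f = (C α * X 0 ^ 4 + C β * X 1) * rel8 + C c * rel12 := by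
  obtain ⟨p, q, hpq⟩ :=
    hf.exists_eq_of_mem_span_pair isWeightedHomogeneous_rel8 isWeightedHomogeneous_rel12 hfI
  simp only [(by decide : 8 ≤ 12), le_refl, if_true, tsub_self,
    weightedHomogeneousComponent_zero _ weights_ne_zero] at hpq
  rw [(weightedHomogeneousComponent_isWeightedHomogeneous (w := ![1, 4]) 4 p
    ).eq_C_mul_X_pow_add_C_mul_X] at hpq
  exact ⟨_, _, _, hpq⟩

end Relations

variable {F : Type*} [Field F] [CharZero F]

/-- With `t = y₁⁴`, `u = y₄`, the form `2496 t³ + 264 t²u + 28 tu² + 3u³` vanishes on `g₁₂`,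
`t g₈` and `u g₈`, hence on the degree-12 part of `I`; this is `1/192` of its value on `φ(g₁₂)`,
where `φ(t) = K t` and `φ(u) = a t + b u`. -/
def obstruction (K a b : F) : F :=
  13 * K ^ 3 - 312 * K ^ 2 * a + 1872 * K * a ^ 2 - 832 * a ^ 3 - 33 * K ^ 2 * b + 396 * K * a * b
    - 264 * a ^ 2 * b + 21 * K * b ^ 2 - 28 * a * b ^ 2 - b ^ 3

theorem relations_of_map_rel8 {k a b c : F}
    {φ : MvPolynomial (Fin 2) F →ₐ[F] MvPolynomial (Fin 2) F}
    (hφ0 : φ (X 0) = C k * X 0) (hφ1 : φ (X 1) = C a * X 0 ^ 4 + C b * X 1)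
    (h : φ rel8 = C c * rel8) :
    (k ^ 4) ^ 2 - 12 * k ^ 4 * a + 24 * a ^ 2 = b ^ 2 ∧ b * (b + 4 * a - k ^ 4) = 0 := by
  have e (x y : F) := congrArg (eval ![x, y]) h
  simp only [rel8, map_sub, map_add, map_mul, map_pow, map_ofNat, hφ0, hφ1, eval_C, eval_X,
    Matrix.cons_val_zero, Matrix.cons_val_one, Matrix.cons_val_fin_one] at e
  constructor
  · linear_combination e 1 0 - e 0 1 / 24
  · linear_combination (e 1 1 - e 1 0 - e 0 1 / 2) / 12

theorem obstruction_eq_zero_of_map_rel12 {k a b c α β : F}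
    {φ : MvPolynomial (Fin 2) F →ₐ[F] MvPolynomial (Fin 2) F}
    (hφ0 : φ (X 0) = C k * X 0) (hφ1 : φ (X 1) = C a * X 0 ^ 4 + C b * X 1)
    (h : φ rel12 = (C α * X 0 ^ 4 + C β * X 1) * rel8 + C c * rel12) :
    obstruction (k ^ 4) a b = 0 := by
  have e (x y : F) := congrArg (eval ![x, y]) h
  simp only [rel8, rel12, map_sub, map_add, map_mul, map_pow, map_ofNat, hφ0, hφ1, eval_C,
    eval_X, Matrix.cons_val_zero, Matrix.cons_val_one, Matrix.cons_val_fin_one] at e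
  unfold obstruction
  -- the functional defining `obstruction`, written through evaluations at `(y₁, y₄)`
  linear_combination (2468 * e 1 0 - 261 * e 0 1 + 146 * e 1 1 - 118 * e 1 (-1)) / 192

theorem eq_zero_and_eq_of_relations {K a b : F} (h8 : K ^ 2 - 12 * K * a + 24 * a ^ 2 = b ^ 2)
    (h8' : b * (b + 4 * a - K) = 0) (h12 : obstruction K a b = 0) : a = 0 ∧ b = K := by
  unfold obstruction at h12
  rcases mul_eq_zero.mp h8' with rfl | hb
  · have hcubic : a ^ 2 * (28 * a - 3 * K) = 0 := by
      linear_combination (1 / 104) * h12 - (1 / 8) * (K - 12 * a) * h8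
    have ha : a = 0 := by
      rcases mul_eq_zero.mp hcubic with ha | hK
      · exact pow_eq_zero_iff two_ne_zero |>.mp ha
      · obtain rfl : K = 28 / 3 * a := by linear_combination -hK / 3
        exact pow_eq_zero_iff two_ne_zero |>.mp (by linear_combination (-9 / 8) * h8)
    subst ha
    exact ⟨rfl, (pow_eq_zero_iff two_ne_zero |>.mp (by linear_combination h8)).symm⟩
  · obtain rfl : b = K - 4 * a := by linear_combination hb
    have ha : a * (2 * a - K) = 0 := by linear_combination (1 / 4) * h8
    rcases mul_eq_zero.mp ha with rfl | hK
    · exact ⟨rfl, by ring⟩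
    · obtain rfl : K = 2 * a := by linear_combination -hK
      obtain rfl : a = 0 := pow_eq_zero_iff three_ne_zero |>.mp (by linear_combination h12 / 1040)
      exact ⟨rfl, by ring⟩

end F4C3

open F4C3

/-- Rigidity computation for `X = F₄/C₃·S¹`: any ℚ-algebra endomorphism of
`ℚ[y₁,y₄]` with `φ(y₁) = k·y₁`, `φ(y₄) = a·y₁⁴ + b·y₄` preserving the ideal
`I = ⟨g₈, g₁₂⟩` satisfies `a = 0` and `b = k⁴`. -/
theorem F4_C3_rigidity (k a b : ℚ)
    (y1 y4 g8 g12 : MvPolynomial (Fin 2) ℚ)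
    (hy1 : y1 = X 0) (hy4 : y4 = X 1)
    (hg8 : g8 = 24 * y4 ^ 2 + y1 ^ 8 - 12 * y1 ^ 4 * y4)
    (hg12 : g12 = y1 ^ 12 - 24 * y1 ^ 8 * y4 + 144 * y1 ^ 4 * y4 ^ 2 - 64 * y4 ^ 3)
    (I : Ideal (MvPolynomial (Fin 2) ℚ)) (hI : I = Ideal.span {g8, g12})
    (φ : MvPolynomial (Fin 2) ℚ →ₐ[ℚ] MvPolynomial (Fin 2) ℚ)
    (hφ1 : φ y1 = C k * y1)
    (hφ4 : φ y4 = C a * y1 ^ 4 + C b * y4)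
    (h8 : φ g8 ∈ I) (h12 : φ g12 ∈ I) :
    a = 0 ∧ b = k ^ 4 := by
  subst hy1 hy4 hg8 hg12 hI
  have hφX : ∀ i, (φ (X i)).IsWeightedHomogeneous ![1, 4] (![1, 4] i) :=
    Fin.forall_fin_two.mpr ⟨hφ1 ▸ isWeightedHomogeneous_X_zero.C_mul k,
      hφ4 ▸ ((isWeightedHomogeneous_X_zero.pow 4).C_mul a).add
        (isWeightedHomogeneous_X_one.C_mul b)⟩
  obtain ⟨c, hc⟩ := eq_C_mul_rel8_of_mem_span (isWeightedHomogeneous_rel8.map hφX) h8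
  obtain ⟨α, β, c', hc'⟩ :=
    exists_eq_add_C_mul_rel12_of_mem_span (isWeightedHomogeneous_rel12.map hφX) h12
  obtain ⟨hrel8, hrel8'⟩ := relations_of_map_rel8 hφ1 hφ4 hc
  exact eq_zero_and_eq_of_relations hrel8 hrel8' (obstruction_eq_zero_of_map_rel12 hφ1 hφ4 hc')
end

section
/- For every k ∈ ℚ, the ℚ-algebra endomorphism φ of ℚ[y1,y3,y4] determined by φ(y1) = k*y1, φ(y3) = k^3*y1^3 − k^3*y3, and φ(y4) = k^4*y1^4 − 2*k^4*y1*y3 + k^4*y4 maps the ideal I into itself; that is, φ(g8) ∈ I, φ(g9) ∈ I and φ(g12) ∈ I. (This verifies that the second solution found in the rigidity computation for E6/A6·S1 genuinely defines an endomorphism of H*(E6/A6·S1;ℚ), namely ψ^k composed with the involution τ.) -/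
/-!
Write `τₖ` for the substitution `y₁ ↦ k y₁`, `y₃ ↦ k³(y₁³ − y₃)`, `y₄ ↦ k⁴(y₁⁴ − 2y₁y₃ + y₄)`.
The relations are homogeneous of weights 8, 9, 12 (with `y₁, y₃, y₄` of weights 1, 3, 4), and
on them `τₖ` acts by `τₖ g₈ = k⁸ g₈`, `τₖ g₉ = −k⁹ g₉` and
`τₖ g₁₂ = k¹² (g₁₂ + (2y₁⁴ − 4y₁y₃) g₈ − 2y₁³ g₉)`.
-/

open MvPolynomial

namespace E6A6

section Relations

variable {R : Type*} [CommRing R]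

def relation8 (y1 y3 y4 : R) : R :=
  6 * y4 ^ 2 - 12 * y1 * y3 * y4 + 9 * y1 ^ 2 * y3 ^ 2 + 3 * y1 ^ 4 * y4
    - 6 * y1 ^ 5 * y3 + y1 ^ 8

def relation9 (y1 y3 y4 : R) : R :=
  -2 * y3 ^ 3 + 6 * y3 * y1 ^ 2 * y4 - 3 * y1 ^ 3 * y3 ^ 2 + 4 * y3 * y1 ^ 6
    - 3 * y1 ^ 5 * y4 - y1 ^ 9

def relation12 (y1 y3 y4 : R) : R :=
  4 * y4 ^ 3 - y3 ^ 4 + 6 * y3 ^ 2 * y1 ^ 2 * y4 - 4 * y3 ^ 3 * y1 ^ 3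
    - 2 * y3 ^ 2 * y1 ^ 6 - 9 * y1 ^ 4 * y4 ^ 2 + 12 * y1 ^ 5 * y4 * y3
    - 6 * y1 ^ 8 * y4 + 4 * y1 ^ 9 * y3 - y1 ^ 12

variable {S F : Type*} [CommRing S] [FunLike F R S] [RingHomClass F R S] (f : F) (y1 y3 y4 : R)

theorem map_relation8 : f (relation8 y1 y3 y4) = relation8 (f y1) (f y3) (f y4) := by
  simp only [relation8, map_add, map_sub, map_mul, map_pow, map_ofNat]

theorem map_relation9 : f (relation9 y1 y3 y4) = relation9 (f y1) (f y3) (f y4) := by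
  simp only [relation9, map_add, map_sub, map_neg, map_mul, map_pow, map_ofNat]

theorem map_relation12 : f (relation12 y1 y3 y4) = relation12 (f y1) (f y3) (f y4) := by
  simp only [relation12, map_add, map_sub, map_mul, map_pow, map_ofNat]

end Relations

section Twist

variable {R : Type*} [CommRing R] (k y1 y3 y4 : R)

theorem relation8_twist :
    relation8 (k * y1) (k ^ 3 * y1 ^ 3 - k ^ 3 * y3)
      (k ^ 4 * y1 ^ 4 - 2 * k ^ 4 * y1 * y3 + k ^ 4 * y4) = k ^ 8 * relation8 y1 y3 y4 := by
  unfold relation8; ring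

theorem relation9_twist :
    relation9 (k * y1) (k ^ 3 * y1 ^ 3 - k ^ 3 * y3)
      (k ^ 4 * y1 ^ 4 - 2 * k ^ 4 * y1 * y3 + k ^ 4 * y4) = -k ^ 9 * relation9 y1 y3 y4 := by
  unfold relation9; ring

theorem relation12_twist :
    relation12 (k * y1) (k ^ 3 * y1 ^ 3 - k ^ 3 * y3)
      (k ^ 4 * y1 ^ 4 - 2 * k ^ 4 * y1 * y3 + k ^ 4 * y4) =
      k ^ 12 * (2 * y1 ^ 4 - 4 * y1 * y3) * relation8 y1 y3 y4
        - 2 * k ^ 12 * y1 ^ 3 * relation9 y1 y3 y4 + k ^ 12 * relation12 y1 y3 y4 := by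
  unfold relation8 relation9 relation12; ring

theorem twist_mem_span_relations :
    let J := Ideal.span {relation8 y1 y3 y4, relation9 y1 y3 y4, relation12 y1 y3 y4}
    let y1' := k * y1
    let y3' := k ^ 3 * y1 ^ 3 - k ^ 3 * y3
    let y4' := k ^ 4 * y1 ^ 4 - 2 * k ^ 4 * y1 * y3 + k ^ 4 * y4
    relation8 y1' y3' y4' ∈ J ∧ relation9 y1' y3' y4' ∈ J ∧ relation12 y1' y3' y4' ∈ J := by
  intro J y1' y3' y4'
  have h8 : relation8 y1 y3 y4 ∈ J := Ideal.subset_span (by simp)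
  have h9 : relation9 y1 y3 y4 ∈ J := Ideal.subset_span (by simp)
  have h12 : relation12 y1 y3 y4 ∈ J := Ideal.subset_span (by simp)
  refine ⟨?_, ?_, ?_⟩
  · rw [relation8_twist]; exact J.mul_mem_left _ h8
  · rw [relation9_twist]; exact J.mul_mem_left _ h9
  · rw [relation12_twist]
    exact add_mem (sub_mem (J.mul_mem_left _ h8) (J.mul_mem_left _ h9)) (J.mul_mem_left _ h12)

end Twist

end E6A6

open E6A6 in
theorem E6_A6_tau_preserves_ideal_general (k : ℚ)
    (y1 y3 y4 g8 g9 g12 : MvPolynomial (Fin 3) ℚ)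
    (hg8 : g8 = 6 * y4 ^ 2 - 12 * y1 * y3 * y4 + 9 * y1 ^ 2 * y3 ^ 2 + 3 * y1 ^ 4 * y4
      - 6 * y1 ^ 5 * y3 + y1 ^ 8)
    (hg9 : g9 = -2 * y3 ^ 3 + 6 * y3 * y1 ^ 2 * y4 - 3 * y1 ^ 3 * y3 ^ 2 + 4 * y3 * y1 ^ 6
      - 3 * y1 ^ 5 * y4 - y1 ^ 9)
    (hg12 : g12 = 4 * y4 ^ 3 - y3 ^ 4 + 6 * y3 ^ 2 * y1 ^ 2 * y4 - 4 * y3 ^ 3 * y1 ^ 3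
      - 2 * y3 ^ 2 * y1 ^ 6 - 9 * y1 ^ 4 * y4 ^ 2 + 12 * y1 ^ 5 * y4 * y3
      - 6 * y1 ^ 8 * y4 + 4 * y1 ^ 9 * y3 - y1 ^ 12)
    (I : Ideal (MvPolynomial (Fin 3) ℚ)) (hI : I = Ideal.span {g8, g9, g12})
    (φ : MvPolynomial (Fin 3) ℚ →ₐ[ℚ] MvPolynomial (Fin 3) ℚ)
    (hφ1 : φ y1 = C k * y1)
    (hφ3 : φ y3 = C (k ^ 3) * y1 ^ 3 - C (k ^ 3) * y3)
    (hφ4 : φ y4 = C (k ^ 4) * y1 ^ 4 - C (2 * k ^ 4) * y1 * y3 + C (k ^ 4) * y4) :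
    φ g8 ∈ I ∧ φ g9 ∈ I ∧ φ g12 ∈ I := by
  change g8 = relation8 y1 y3 y4 at hg8
  change g9 = relation9 y1 y3 y4 at hg9
  change g12 = relation12 y1 y3 y4 at hg12
  simp only [map_pow, map_mul, map_ofNat] at hφ3 hφ4
  subst hg8 hg9 hg12 hI
  rw [map_relation8, map_relation9, map_relation12, hφ1, hφ3, hφ4]
  exact twist_mem_span_relations (C k) y1 y3 y4

/-- The second solution in the `E₆/A₆·S¹` rigidity computation genuinely
defines an endomorphism of `H^*(E₆/A₆·S¹;ℚ)`: the ℚ-algebra endomorphism with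
`φ(y₁) = k·y₁`, `φ(y₃) = k³·y₁³ − k³·y₃`, `φ(y₄) = k⁴·y₁⁴ − 2k⁴·y₁y₃ + k⁴·y₄`
maps the ideal `I = ⟨g₈, g₉, g₁₂⟩` into itself. -/
theorem E6_A6_tau_preserves_ideal (k : ℚ)
    (y1 y3 y4 g8 g9 g12 : MvPolynomial (Fin 3) ℚ)
    (hy1 : y1 = X 0) (hy3 : y3 = X 1) (hy4 : y4 = X 2)
    (hg8 : g8 = 6 * y4 ^ 2 - 12 * y1 * y3 * y4 + 9 * y1 ^ 2 * y3 ^ 2 + 3 * y1 ^ 4 * y4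
      - 6 * y1 ^ 5 * y3 + y1 ^ 8)
    (hg9 : g9 = -2 * y3 ^ 3 + 6 * y3 * y1 ^ 2 * y4 - 3 * y1 ^ 3 * y3 ^ 2 + 4 * y3 * y1 ^ 6
      - 3 * y1 ^ 5 * y4 - y1 ^ 9)
    (hg12 : g12 = 4 * y4 ^ 3 - y3 ^ 4 + 6 * y3 ^ 2 * y1 ^ 2 * y4 - 4 * y3 ^ 3 * y1 ^ 3
      - 2 * y3 ^ 2 * y1 ^ 6 - 9 * y1 ^ 4 * y4 ^ 2 + 12 * y1 ^ 5 * y4 * y3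
      - 6 * y1 ^ 8 * y4 + 4 * y1 ^ 9 * y3 - y1 ^ 12)
    (I : Ideal (MvPolynomial (Fin 3) ℚ)) (hI : I = Ideal.span {g8, g9, g12})
    (φ : MvPolynomial (Fin 3) ℚ →ₐ[ℚ] MvPolynomial (Fin 3) ℚ)
    (hφ1 : φ y1 = C k * y1)
    (hφ3 : φ y3 = C (k ^ 3) * y1 ^ 3 - C (k ^ 3) * y3)
    (hφ4 : φ y4 = C (k ^ 4) * y1 ^ 4 - C (2 * k ^ 4) * y1 * y3 + C (k ^ 4) * y4) :
    φ g8 ∈ I ∧ φ g9 ∈ I ∧ φ g12 ∈ I :=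
  E6_A6_tau_preserves_ideal_general k y1 y3 y4 g8 g9 g12 hg8 hg9 hg12 I hI φ hφ1 hφ3 hφ4
end

section
/- Let φ : ℚ[y1,y5,y9] → ℚ[y1,y5,y9] be the ℚ-algebra endomorphism determined by φ(y1) = k*y1, φ(y5) = a1*y1^5 + a2*y5, and φ(y9) = b1*y1^9 + b2*y1^4*y5 + b3*y9, where k, a1, a2, b1, b2, b3 ∈ ℚ. If φ(g10) ∈ I, φ(g14) ∈ I and φ(g18) ∈ I, then a1 = 0, b1 = 0, b2 = 0, a2 = k^5 and b3 = k^9. (This is the rigidity computation for X = E7/E6·S1: every degree-preserving endomorphism of H*(X;ℚ) sending the Kaehlerian class y1 to k*y1 is the Adams operator ψ^k.) -/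
open MvPolynomial

abbrev E7E6A3 : Type := MvPolynomial (Fin 3) ℚ

noncomputable def E7E6tau : E7E6A3 →ₐ[ℚ] Polynomial E7E6A3 :=
  aeval ![Polynomial.C (X 0) * Polynomial.X ^ 1,
          Polynomial.C (X 1) * Polynomial.X ^ 5,
          Polynomial.C (X 2) * Polynomial.X ^ 9]

lemma E7E6coeff_mul_C_X_pow (p : Polynomial E7E6A3) (a : E7E6A3) (m n : ℕ) :
    (p * (Polynomial.C a * Polynomial.X ^ m)).coeff n =
      if m ≤ n then p.coeff (n - m) * a else 0 := by
  rw [show p * (Polynomial.C a * Polynomial.X ^ m)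
      = (p * Polynomial.C a) * Polynomial.X ^ m by ring,
    Polynomial.coeff_mul_X_pow']
  split_ifs <;> simp [Polynomial.coeff_mul_C]

lemma E7E6tau_coeff_shape (Q : E7E6A3) :
    ∀ n : ℕ, n ≤ 4 → ∃ c : ℚ, (E7E6tau Q).coeff n = C c * (X 0 : E7E6A3) ^ n := by
  induction Q using MvPolynomial.induction_on with
  | C a =>
      intro n _
      refine ⟨if n = 0 then a else 0, ?_⟩
      have ht : E7E6tau (C a) = Polynomial.C (C a) := by
        simp [E7E6tau, algHom_C]
      rw [ht, Polynomial.coeff_C]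
      split_ifs with h
      · subst h; simp
      · simp
  | add p q hp hq =>
      intro n hn
      obtain ⟨c, hc⟩ := hp n hn; obtain ⟨d, hd⟩ := hq n hn
      exact ⟨c + d, by rw [map_add, Polynomial.coeff_add, hc, hd, map_add]; ring⟩
  | mul_X p i hp =>
      intro n hn
      rw [map_mul]
      fin_cases i <;>
        [skip; skip; skip]
      · show ∃ c, (E7E6tau p * E7E6tau (X 0)).coeff n = C c * (X 0 : E7E6A3) ^ n
        have hX : E7E6tau (X (0 : Fin 3)) = Polynomial.C (X 0) * Polynomial.X ^ 1 := by
          simp [E7E6tau]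
        rw [hX, E7E6coeff_mul_C_X_pow]
        rcases Nat.eq_zero_or_pos n with h0 | h0
        · subst h0
          exact ⟨0, by norm_num⟩
        · obtain ⟨c, hc⟩ := hp (n-1) (by omega)
          refine ⟨c, ?_⟩
          rw [if_pos (by omega), hc, mul_assoc, ← pow_succ]
          have hsucc : n - 1 + 1 = n := by omega
          rw [hsucc]
      · show ∃ c, (E7E6tau p * E7E6tau (X 1)).coeff n = C c * (X 0 : E7E6A3) ^ n
        have hX : E7E6tau (X (1 : Fin 3)) = Polynomial.C (X 1) * Polynomial.X ^ 5 := by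
          simp [E7E6tau]
        rw [hX, E7E6coeff_mul_C_X_pow, if_neg (by omega)]
        exact ⟨0, by simp⟩
      · show ∃ c, (E7E6tau p * E7E6tau (X 2)).coeff n = C c * (X 0 : E7E6A3) ^ n
        have hX : E7E6tau (X (2 : Fin 3)) = Polynomial.C (X 2) * Polynomial.X ^ 9 := by
          simp [E7E6tau]
        rw [hX, E7E6coeff_mul_C_X_pow, if_neg (by omega)]
        exact ⟨0, by simp⟩

set_option maxHeartbeats 4000000 in
/-- Rigidity computation for `X = E₇/E₆·S¹`. -/
theorem E7_E6_rigidity (k a1 a2 b1 b2 b3 : ℚ)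
    (y1 y5 y9 g10 g14 g18 : MvPolynomial (Fin 3) ℚ)
    (hy1 : y1 = X 0) (hy5 : y5 = X 1) (hy9 : y9 = X 2)
    (hg10 : g10 = y5 ^ 2 - 2 * y1 * y9)
    (hg14 : g14 = 2 * y5 * y9 - 9 * y1 ^ 4 * y5 ^ 2 + 6 * y1 ^ 9 * y5 - y1 ^ 14)
    (hg18 : g18 = y9 ^ 2 + 10 * y1 ^ 3 * y5 ^ 3 - 9 * y1 ^ 8 * y5 ^ 2 + 2 * y1 ^ 13 * y5)
    (I : Ideal (MvPolynomial (Fin 3) ℚ)) (hI : I = Ideal.span {g10, g14, g18})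
    (φ : MvPolynomial (Fin 3) ℚ →ₐ[ℚ] MvPolynomial (Fin 3) ℚ)
    (hφ1 : φ y1 = C k * y1)
    (hφ5 : φ y5 = C a1 * y1 ^ 5 + C a2 * y5)
    (hφ9 : φ y9 = C b1 * y1 ^ 9 + C b2 * y1 ^ 4 * y5 + C b3 * y9)
    (h10 : φ g10 ∈ I) (h14 : φ g14 ∈ I) (h18 : φ g18 ∈ I) :
    a1 = 0 ∧ b1 = 0 ∧ b2 = 0 ∧ a2 = k ^ 5 ∧ b3 = k ^ 9 := by
  subst hy1 hy5 hy9 hg10 hg14 hg18 hI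
  -- tau values on the generators
  have ht10 : E7E6tau ((X 1 : E7E6A3) ^ 2 - 2 * X 0 * X 2)
      = Polynomial.C ((X 1 : E7E6A3) ^ 2 - 2 * X 0 * X 2) * Polynomial.X ^ 10 := by
    simp only [E7E6tau, map_sub, map_add, map_mul, map_pow, map_ofNat, aeval_X,
      Matrix.cons_val_zero, Matrix.cons_val_one, Matrix.head_cons,
      Matrix.cons_val_two, Matrix.tail_cons]
    ring
  have ht14 : E7E6tau (2 * X 1 * X 2 - 9 * X 0 ^ 4 * X 1 ^ 2 + 6 * X 0 ^ 9 * X 1 - (X 0:E7E6A3) ^ 14)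
      = Polynomial.C (2 * X 1 * X 2 - 9 * X 0 ^ 4 * X 1 ^ 2 + 6 * X 0 ^ 9 * X 1 - (X 0:E7E6A3) ^ 14)
        * Polynomial.X ^ 14 := by
    simp only [E7E6tau, map_sub, map_add, map_mul, map_pow, map_ofNat, aeval_X,
      Matrix.cons_val_zero, Matrix.cons_val_one, Matrix.head_cons,
      Matrix.cons_val_two, Matrix.tail_cons]
    ring
  have ht18 : E7E6tau ((X 2:E7E6A3) ^ 2 + 10 * X 0 ^ 3 * X 1 ^ 3 - 9 * X 0 ^ 8 * X 1 ^ 2 + 2 * X 0 ^ 13 * X 1)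
      = Polynomial.C ((X 2:E7E6A3) ^ 2 + 10 * X 0 ^ 3 * X 1 ^ 3 - 9 * X 0 ^ 8 * X 1 ^ 2 + 2 * X 0 ^ 13 * X 1)
        * Polynomial.X ^ 18 := by
    simp only [E7E6tau, map_sub, map_add, map_mul, map_pow, map_ofNat, aeval_X,
      Matrix.cons_val_zero, Matrix.cons_val_one, Matrix.head_cons,
      Matrix.cons_val_two, Matrix.tail_cons]
    ring
  have htφ10 : E7E6tau (φ ((X 1 : E7E6A3) ^ 2 - 2 * X 0 * X 2))
      = Polynomial.C (φ ((X 1 : E7E6A3) ^ 2 - 2 * X 0 * X 2)) * Polynomial.X ^ 10 := by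
    simp only [map_sub, map_add, map_mul, map_pow, map_ofNat, hφ1, hφ5, hφ9, E7E6tau, aeval_X,
      aeval_C, Polynomial.algebraMap_apply, MvPolynomial.algebraMap_eq,
      Matrix.cons_val_zero, Matrix.cons_val_one, Matrix.head_cons,
      Matrix.cons_val_two, Matrix.tail_cons]
    ring
  have htφ14 : E7E6tau (φ (2 * X 1 * X 2 - 9 * X 0 ^ 4 * X 1 ^ 2 + 6 * X 0 ^ 9 * X 1 - (X 0:E7E6A3) ^ 14))
      = Polynomial.C (φ (2 * X 1 * X 2 - 9 * X 0 ^ 4 * X 1 ^ 2 + 6 * X 0 ^ 9 * X 1 - (X 0:E7E6A3) ^ 14))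
        * Polynomial.X ^ 14 := by
    simp only [map_sub, map_add, map_mul, map_pow, map_ofNat, hφ1, hφ5, hφ9, E7E6tau, aeval_X,
      aeval_C, Polynomial.algebraMap_apply, MvPolynomial.algebraMap_eq,
      Matrix.cons_val_zero, Matrix.cons_val_one, Matrix.head_cons,
      Matrix.cons_val_two, Matrix.tail_cons]
    ring
  have htφ18 : E7E6tau (φ ((X 2:E7E6A3) ^ 2 + 10 * X 0 ^ 3 * X 1 ^ 3 - 9 * X 0 ^ 8 * X 1 ^ 2 + 2 * X 0 ^ 13 * X 1))
      = Polynomial.C (φ ((X 2:E7E6A3) ^ 2 + 10 * X 0 ^ 3 * X 1 ^ 3 - 9 * X 0 ^ 8 * X 1 ^ 2 + 2 * X 0 ^ 13 * X 1))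
        * Polynomial.X ^ 18 := by
    simp only [map_sub, map_add, map_mul, map_pow, map_ofNat, hφ1, hφ5, hφ9, E7E6tau, aeval_X,
      aeval_C, Polynomial.algebraMap_apply, MvPolynomial.algebraMap_eq,
      Matrix.cons_val_zero, Matrix.cons_val_one, Matrix.head_cons,
      Matrix.cons_val_two, Matrix.tail_cons]
    ring
  -- representations
  obtain ⟨Pa, za, hza, hPa⟩ := Ideal.mem_span_insert.mp h10
  obtain ⟨Qa, za2, hza2, hQa⟩ := Ideal.mem_span_insert.mp hza
  obtain ⟨Ra, hRa⟩ := Ideal.mem_span_singleton'.mp hza2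
  subst hQa; rw [← hRa] at hPa
  obtain ⟨Pb, zb, hzb, hPb⟩ := Ideal.mem_span_insert.mp h14
  obtain ⟨Qb, zb2, hzb2, hQb⟩ := Ideal.mem_span_insert.mp hzb
  obtain ⟨Rb, hRb⟩ := Ideal.mem_span_singleton'.mp hzb2
  subst hQb; rw [← hRb] at hPb
  obtain ⟨Pc, zc, hzc, hPc⟩ := Ideal.mem_span_insert.mp h18
  obtain ⟨Qc, zc2, hzc2, hQc⟩ := Ideal.mem_span_insert.mp hzc
  obtain ⟨Rc, hRc⟩ := Ideal.mem_span_singleton'.mp hzc2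
  subst hQc; rw [← hRc] at hPc
  -- coefficient extraction, degree 10
  have tau10 : Polynomial.C (φ ((X 1 : E7E6A3) ^ 2 - 2 * X 0 * X 2)) * Polynomial.X ^ 10
      = E7E6tau Pa * (Polynomial.C ((X 1 : E7E6A3) ^ 2 - 2 * X 0 * X 2) * Polynomial.X ^ 10)
        + (E7E6tau Qa * (Polynomial.C (2 * X 1 * X 2 - 9 * X 0 ^ 4 * X 1 ^ 2 + 6 * X 0 ^ 9 * X 1 - (X 0:E7E6A3) ^ 14) * Polynomial.X ^ 14)
        + E7E6tau Ra * (Polynomial.C ((X 2:E7E6A3) ^ 2 + 10 * X 0 ^ 3 * X 1 ^ 3 - 9 * X 0 ^ 8 * X 1 ^ 2 + 2 * X 0 ^ 13 * X 1) * Polynomial.X ^ 18)) := by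
    rw [← htφ10, ← ht10, ← ht14, ← ht18, ← map_mul, ← map_mul, ← map_mul, ← map_add, ← map_add, hPa]
  have hco10 := congrArg (fun p => Polynomial.coeff p 10) tau10
  simp only [Polynomial.coeff_add, E7E6coeff_mul_C_X_pow, Polynomial.coeff_C_mul,
    Polynomial.coeff_X_pow] at hco10
  norm_num at hco10
  -- coefficient extraction, degree 14
  have tau14 : Polynomial.C (φ (2 * X 1 * X 2 - 9 * X 0 ^ 4 * X 1 ^ 2 + 6 * X 0 ^ 9 * X 1 - (X 0:E7E6A3) ^ 14)) * Polynomial.X ^ 14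
      = E7E6tau Pb * (Polynomial.C ((X 1 : E7E6A3) ^ 2 - 2 * X 0 * X 2) * Polynomial.X ^ 10)
        + (E7E6tau Qb * (Polynomial.C (2 * X 1 * X 2 - 9 * X 0 ^ 4 * X 1 ^ 2 + 6 * X 0 ^ 9 * X 1 - (X 0:E7E6A3) ^ 14) * Polynomial.X ^ 14)
        + E7E6tau Rb * (Polynomial.C ((X 2:E7E6A3) ^ 2 + 10 * X 0 ^ 3 * X 1 ^ 3 - 9 * X 0 ^ 8 * X 1 ^ 2 + 2 * X 0 ^ 13 * X 1) * Polynomial.X ^ 18)) := by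
    rw [← htφ14, ← ht10, ← ht14, ← ht18, ← map_mul, ← map_mul, ← map_mul, ← map_add, ← map_add, hPb]
  have hco14 := congrArg (fun p => Polynomial.coeff p 14) tau14
  simp only [Polynomial.coeff_add, E7E6coeff_mul_C_X_pow, Polynomial.coeff_C_mul,
    Polynomial.coeff_X_pow] at hco14
  norm_num at hco14
  obtain ⟨c2, hc2⟩ := E7E6tau_coeff_shape Qb 0 (by norm_num)
  rw [hc2] at hco14
  -- coefficient extraction, degree 18
  have tau18 : Polynomial.C (φ ((X 2:E7E6A3) ^ 2 + 10 * X 0 ^ 3 * X 1 ^ 3 - 9 * X 0 ^ 8 * X 1 ^ 2 + 2 * X 0 ^ 13 * X 1)) * Polynomial.X ^ 18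
      = E7E6tau Pc * (Polynomial.C ((X 1 : E7E6A3) ^ 2 - 2 * X 0 * X 2) * Polynomial.X ^ 10)
        + (E7E6tau Qc * (Polynomial.C (2 * X 1 * X 2 - 9 * X 0 ^ 4 * X 1 ^ 2 + 6 * X 0 ^ 9 * X 1 - (X 0:E7E6A3) ^ 14) * Polynomial.X ^ 14)
        + E7E6tau Rc * (Polynomial.C ((X 2:E7E6A3) ^ 2 + 10 * X 0 ^ 3 * X 1 ^ 3 - 9 * X 0 ^ 8 * X 1 ^ 2 + 2 * X 0 ^ 13 * X 1) * Polynomial.X ^ 18)) := by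
    rw [← htφ18, ← ht10, ← ht14, ← ht18, ← map_mul, ← map_mul, ← map_mul, ← map_add, ← map_add, hPc]
  have hco18 := congrArg (fun p => Polynomial.coeff p 18) tau18
  simp only [Polynomial.coeff_add, E7E6coeff_mul_C_X_pow, Polynomial.coeff_C_mul,
    Polynomial.coeff_X_pow] at hco18
  norm_num at hco18
  obtain ⟨c4, hc4⟩ := E7E6tau_coeff_shape Qc 4 (by norm_num)
  obtain ⟨c3, hc3⟩ := E7E6tau_coeff_shape Rc 0 (by norm_num)
  rw [hc4, hc3] at hco18
  -- evaluations at points (2, 2t, t^2), t = 0..4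
  have hv0 := congrArg (fun q : E7E6A3 => (aeval ![(2:ℚ), 0, 0]) q) hco10
  have hv1 := congrArg (fun q : E7E6A3 => (aeval ![(2:ℚ), 2, 1]) q) hco10
  have hv2 := congrArg (fun q : E7E6A3 => (aeval ![(2:ℚ), 4, 4]) q) hco10
  have hw0 := congrArg (fun q : E7E6A3 => (aeval ![(2:ℚ), 0, 0]) q) hco14
  have hw1 := congrArg (fun q : E7E6A3 => (aeval ![(2:ℚ), 2, 1]) q) hco14
  have hw2 := congrArg (fun q : E7E6A3 => (aeval ![(2:ℚ), 4, 4]) q) hco14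
  have hw3 := congrArg (fun q : E7E6A3 => (aeval ![(2:ℚ), 6, 9]) q) hco14
  have hx0 := congrArg (fun q : E7E6A3 => (aeval ![(2:ℚ), 0, 0]) q) hco18
  have hx1 := congrArg (fun q : E7E6A3 => (aeval ![(2:ℚ), 2, 1]) q) hco18
  have hx2 := congrArg (fun q : E7E6A3 => (aeval ![(2:ℚ), 4, 4]) q) hco18
  have hx3 := congrArg (fun q : E7E6A3 => (aeval ![(2:ℚ), 6, 9]) q) hco18
  have hx4 := congrArg (fun q : E7E6A3 => (aeval ![(2:ℚ), 8, 16]) q) hco18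
  simp only [map_sub, map_add, map_mul, map_pow, map_ofNat, hφ1, hφ5, hφ9, aeval_X,
    aeval_C, Algebra.algebraMap_self, RingHom.id_apply,
    Matrix.cons_val_zero, Matrix.cons_val_one, Matrix.head_cons,
    Matrix.cons_val_two, Matrix.tail_cons]
    at hv0 hv1 hv2 hw0 hw1 hw2 hw3 hx0 hx1 hx2 hx3 hx4
  -- the twelve coefficient equations
  have hE3 : a1^2 - 2*k*b1 = 0 := by linear_combination (1/1024 : ℚ) * hv0
  have hE2 : a1*a2 - k*b2 = 0 := by
    linear_combination (-(3:ℚ)/256) * hv0 + (1/64 : ℚ) * hv1 + (-(1:ℚ)/256) * hv2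
  have hE1 : a2^2 - k*b3 = 0 := by
    linear_combination (1/8 : ℚ) * hv0 + (-(1:ℚ)/4) * hv1 + (1/8 : ℚ) * hv2
  have hF4 : 2*a1*b1 - 9*k^4*a1^2 + 6*k^9*a1 - k^14 + c2 = 0 := by
    linear_combination (1/16384 : ℚ) * hw0
  have hF3 : a1*b2 + a2*b1 - 9*k^4*a1*a2 + 3*k^9*a2 - 3*c2 = 0 := by
    linear_combination (-(11:ℚ)/12288) * hw0 + (3/2048 : ℚ) * hw1
      + (-(3:ℚ)/4096) * hw2 + (1/6144 : ℚ) * hw3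
  have hF2 : a1*b3 + 2*a2*b2 - 9*k^4*a2^2 + 9*c2 = 0 := by
    linear_combination (1/64 : ℚ) * hw0 + (-(5:ℚ)/128) * hw1 + (1/32 : ℚ) * hw2
      + (-(1:ℚ)/128) * hw3
  have hF1 : a2*b3 - c2 = 0 := by
    linear_combination (-(1:ℚ)/24) * hw0 + (1/8 : ℚ) * hw1 + (-(1:ℚ)/8) * hw2
      + (1/24 : ℚ) * hw3
  have hG5 : b1^2 + 10*k^3*a1^3 - 9*k^8*a1^2 + 2*k^13*a1 + c4 = 0 := by
    linear_combination (1/262144 : ℚ) * hx0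
  have hG4 : b1*b2 + 15*k^3*a1^2*a2 - 9*k^8*a1*a2 + k^13*a2 - 3*c4 - c3 = 0 := by
    linear_combination (-(25:ℚ)/393216) * hx0 + (1/8192 : ℚ) * hx1 + (-(3:ℚ)/32768) * hx2
      + (1/24576 : ℚ) * hx3 + (-(1:ℚ)/131072) * hx4
  have hG3 : b1*b3 + b2^2 + 30*k^3*a1*a2^2 - 9*k^8*a2^2 + 9*c4 + 9*c3 = 0 := by
    linear_combination (35/24576 : ℚ) * hx0 + (-(13:ℚ)/3072) * hx1 + (19/4096 : ℚ) * hx2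
      + (-(7:ℚ)/3072) * hx3 + (11/24576 : ℚ) * hx4
  have hG2 : b2*b3 + 10*k^3*a2^3 - c4 - 10*c3 = 0 := by
    linear_combination (-(5:ℚ)/768) * hx0 + (3/128 : ℚ) * hx1 + (-(1:ℚ)/32) * hx2
      + (7/384 : ℚ) * hx3 + (-(1:ℚ)/256) * hx4
  have hG1 : b3^2 - c3 = 0 := by
    linear_combination (1/24 : ℚ) * hx0 + (-(1:ℚ)/6) * hx1 + (1/4 : ℚ) * hx2
      + (-(1:ℚ)/6) * hx3 + (1/24 : ℚ) * hx4
  clear hv0 hv1 hv2 hw0 hw1 hw2 hw3 hx0 hx1 hx2 hx3 hx4 hco10 hco14 hco18 tau10 tau14 tau18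
  clear ht10 ht14 ht18 htφ10 htφ14 htφ18 hPa hPb hPc hza hzb hzc hza2 hzb2 hzc2 hRa hRb hRc
  clear hc2 hc3 hc4 h10 h14 h18 hφ1 hφ5 hφ9
  -- scalar endgame
  by_cases hk : k = 0
  · subst hk
    have ha2 : a2 = 0 := by
      have h2 : a2^2 = 0 := by linear_combination hE1
      exact pow_eq_zero_iff (by norm_num) |>.mp h2
    have ha1 : a1 = 0 := by
      have h2 : a1^2 = 0 := by linear_combination hE3
      exact pow_eq_zero_iff (by norm_num) |>.mp h2
    subst ha1 ha2
    have hal : b2*b3 + b1^2 - 10*b3^2 = 0 := by linear_combination hG2 + hG5 - 10*hG1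
    have hbe : b1*b3 + b2^2 - 9*b1^2 + 9*b3^2 = 0 := by linear_combination hG3 - 9*hG5 + 9*hG1
    have hga : b1*b2 + 3*b1^2 - b3^2 = 0 := by linear_combination hG4 + 3*hG5 - hG1
    by_cases hb1 : b1 = 0
    · subst hb1
      have hb3 : b3 = 0 := by
        have h2 : b3^2 = 0 := by linear_combination -hga
        exact pow_eq_zero_iff (by norm_num) |>.mp h2
      have hb2 : b2 = 0 := by
        have h2 : b2^2 = 0 := by linear_combination hbe - 9*b3*hb3
        exact pow_eq_zero_iff (by norm_num) |>.mp h2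
      exact ⟨rfl, rfl, hb2, by norm_num, by rw [hb3]; norm_num⟩
    · exfalso
      have hT1 : b2*b3 - 10*b1*b2 - 29*b1^2 = 0 := by linear_combination hal - 10*hga
      have hT2 : b1*b3 + b2^2 + 9*b1*b2 + 18*b1^2 = 0 := by linear_combination hbe + 9*hga
      have hQ2 : b1*(841*b1^3 + 580*b1^2*b2 + 97*b1*b2^2 - b2^3) = 0 := by
        linear_combination (-(b2*b3 + 29*b1^2 + 10*b1*b2))*hT1 - b2^2*hga
      have hQ2c : 841*b1^3 + 580*b1^2*b2 + 97*b1*b2^2 - b2^3 = 0 :=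
        (mul_eq_zero.mp hQ2).resolve_left hb1
      have hQ1 : b1*(2*((b2+3*b1)*(5*b2^2+45*b1*b2+87*b1^2))) = 0 := by
        linear_combination (b1*b3)*hT1 + (29*b1^2+10*b1*b2)*hT2 + (b1*b2)*hga
      have hP1 : (b2+3*b1)*(5*b2^2+45*b1*b2+87*b1^2) = 0 := by
        have h2 := (mul_eq_zero.mp hQ1).resolve_left hb1
        linarith
      rcases mul_eq_zero.mp hP1 with hc | hq
      · have h3 : b1^3 = 0 := by
          linear_combination hQ2c - (-b2^2 + 100*b1*b2 + 280*b1^2)*hc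
        exact hb1 (pow_eq_zero_iff (by norm_num) |>.mp h3)
      · have h4 : b1^4 = 0 := by
          linear_combination (-1/106807 : ℚ)*((275750*b1+44575*b2)*hQ2c
            + (-2666811*b1^2 - 889840*b1*b2 + 8915*b2^2)*hq)
        exact hb1 (pow_eq_zero_iff (by norm_num) |>.mp h4)
  · -- k ≠ 0
    have hi : a2^2*(a1 + 3*a2 - 3*k^5) = 0 := by
      linear_combination (k/3)*hF2 + (a1/3)*hE1 + (2*a2/3)*hE2 + 3*k*hF1 + 3*a2*hE1
    have hii : a2*(a1^2 - 6*k^5*a1 + 2*k^10 - 2*a2^2) = 0 := by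
      linear_combination (2*k/3)*hF3 + (2*a1/3)*hE2 + (a2/3)*hE3 - 2*k*hF1 - 2*a2*hE1
    have hiii : a1^3 - 9*k^5*a1^2 + 6*k^10*a1 - k^15 + a2^3 = 0 := by
      linear_combination k*hF4 + a1*hE3 + k*hF1 + a2*hE1
    have hvii : a1^4 + 40*k^5*a1^3 - 36*k^10*a1^2 + 8*k^15*a1 + 4*a1*a2^3 - 40*a2^4 + 40*k^5*a2^3 = 0 := by
      linear_combination 4*k^2*hG5 + 4*k^2*hG2 - 40*k^2*hG1 + (a1^2 + 2*k*b1)*hE3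
        + (4*k*b3)*hE2 + (4*a1*a2 - 40*a2^2 - 40*k*b3)*hE1
    by_cases ha2 : a2 = 0
    · exfalso
      subst ha2
      have hc1 : a1^3 - 9*k^5*a1^2 + 6*k^10*a1 - k^15 = 0 := by linear_combination hiii
      have hc2' : a1*(a1^3 + 40*k^5*a1^2 - 36*k^10*a1 + 8*k^15) = 0 := by linear_combination hvii
      by_cases ha1 : a1 = 0
      · subst ha1
        have h15 : k^15 = 0 := by linear_combination -hc1
        exact hk (pow_eq_zero_iff (by norm_num) |>.mp h15)
      · have hcc := (mul_eq_zero.mp hc2').resolve_left ha1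
        have hsq5 : k^5*(7*a1 - 3*k^5)^2 = 0 := by linear_combination hcc - hc1
        have h7sq := (mul_eq_zero.mp hsq5).resolve_left (pow_ne_zero 5 hk)
        have h7 : 7*a1 - 3*k^5 = 0 := pow_eq_zero_iff (by norm_num) |>.mp h7sq
        have h15 : k^15 = 0 := by
          linear_combination (-343 : ℚ)*hc1 + (49*a1^2 - 420*k^5*a1 + 114*k^10)*h7
        exact hk (pow_eq_zero_iff (by norm_num) |>.mp h15)
    · have hA : a1 + 3*a2 - 3*k^5 = 0 := (mul_eq_zero.mp hi).resolve_left (pow_ne_zero 2 ha2)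
      have hB : a1^2 - 6*k^5*a1 + 2*k^10 - 2*a2^2 = 0 := (mul_eq_zero.mp hii).resolve_left ha2
      have hsq : (a2 - k^5)*(a2 + k^5) = 0 := by
        linear_combination (1/7 : ℚ)*hB + ((3/7)*a2 - (1/7)*a1 + (3/7)*k^5)*hA
      rcases mul_eq_zero.mp hsq with hpos | hneg
      · have ha2k : a2 = k^5 := by linarith
        have ha1 : a1 = 0 := by linear_combination hA - 3*hpos
        have hb1 : b1 = 0 := by
          have h2 : k*b1 = 0 := by linear_combination (-(1:ℚ)/2)*hE3 + (a1/2)*ha1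
          exact (mul_eq_zero.mp h2).resolve_left hk
        have hb2 : b2 = 0 := by
          have h2 : k*b2 = 0 := by linear_combination -hE2 + a2*ha1
          exact (mul_eq_zero.mp h2).resolve_left hk
        have hb3 : b3 = k^9 := by
          have h2 : k*(b3 - k^9) = 0 := by linear_combination -hE1 + (a2 + k^5)*hpos
          have h3 := (mul_eq_zero.mp h2).resolve_left hk
          linarith
        exact ⟨ha1, hb1, hb2, ha2k, hb3⟩
      · exfalso
        have h15 : k^15 = 0 := by
          linear_combination (-(1:ℚ)/74)*hiii
            - ((-9/74)*a2^2 + (3/74)*a1*a2 + (-1/74)*a1^2 + (-9/74)*k^5*a2 + (3/37)*k^5*a1 + (6/37)*k^10)*hA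
            - ((13/37)*a2^2 - (13/37)*k^5*a2 - (1/2)*k^10)*hneg
        exact hk (pow_eq_zero_iff (by norm_num) |>.mp h15)
end

section
/- Let φ : ℚ[y1,y4,y6] → ℚ[y1,y4,y6] be the ℚ-algebra endomorphism determined by φ(y1) = k*y1, φ(y4) = a1*y1^4 + a2*y4, and φ(y6) = b1*y1^6 + b2*y1^2*y4 + b3*y6, where k, a1, a2, b1, b2, b3 ∈ ℚ. If φ(g12) ∈ I, φ(g14) ∈ I and φ(g18) ∈ I, then a1 = 0, b1 = 0, b2 = 0, a2 = k^4 and b3 = k^6. (This is the rigidity computation for X = E7/D6·S1: every degree-preserving endomorphism of H*(X;ℚ) sending the Kaehlerian class y1 to k*y1 is the Adams operator ψ^k.) -/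
/-!
Give `y1, y4, y6` the weights `1, 4, 6`. The relations are weighted homogeneous of degrees
`12, 14, 18` and `φ` preserves weights, so comparing graded pieces turns
`φ g12, φ g14, φ g18 ∈ I` into identities `φ g12 = c g12`, `φ g14 = e y1² g12 + d g14` and
`φ g18 = P g12 + (q y1⁴ + q' y4) g14 + r g18` with scalars `c, e, d, q, q', r`.
Evaluating them at a few rational points gives equations in the coefficients of `φ`.

If `b3 ≠ 0` these force `b2 = 0`, `a2 = a1 + k⁴`, `b3 = k⁶ - 3 b1` and `a1 (a1 + 2 k⁴) = 0`,
and all cases other than `φ = ψ^k` are excluded over `ℚ`. If `b3 = 0`, then `a2 = b2 = 0`,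
so `φ` maps into `ℚ[y1]` and `φ g = g(k, a1, b1) y1ⁿ`; as `y1¹⁸ ∉ I`, all three
`g(k, a1, b1)` vanish, and the relations have no common nonzero zero (`k³⁴` lies in the ideal
they generate), so `φ = ψ^0`.
-/

open MvPolynomial

theorem exists_homogeneous_coeffs_of_mem_span {ι A σ : Type*} [Fintype ι] [CommRing A]
    [SetLike σ A] [AddSubgroupClass σ A] (𝒜 : ℕ → σ) [GradedRing 𝒜] {g : ι → A} {d : ι → ℕ}
    (hg : ∀ s, g s ∈ 𝒜 (d s)) {x : A} {n : ℕ} (hx : x ∈ 𝒜 n)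
    (hspan : x ∈ Ideal.span (Set.range g)) :
    ∃ a : ι → A, (∀ s, a s ∈ 𝒜 (n - d s)) ∧ (∀ s, n < d s → a s = 0) ∧ x = ∑ s, a s * g s := by
  classical
  obtain ⟨c, rfl⟩ := Ideal.mem_span_range_iff_exists_fun.mp hspan
  refine ⟨fun s => if d s ≤ n then DirectSum.decompose 𝒜 (c s) (n - d s) else 0,
    fun s => ?_, fun s hs => if_neg (not_le.mpr hs), ?_⟩
  · dsimp only
    split_ifs
    · exact SetLike.coe_mem _
    · exact zero_mem _
  · conv_lhs => rw [← DirectSum.decompose_of_mem_same 𝒜 hx]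
    rw [DirectSum.decompose_sum, DFinsupp.finsetSum_apply, AddSubmonoidClass.coe_finsetSum]
    refine Finset.sum_congr rfl fun s _ => ?_
    rw [DirectSum.coe_decompose_mul_of_right_mem 𝒜 n (hg s)]
    by_cases h : d s ≤ n <;> simp [h]

theorem MvPolynomial.IsWeightedHomogeneous.eq_sum_monomial {σ R : Type*} [CommSemiring R]
    {w : σ → ℕ} {p : MvPolynomial σ R} {n : ℕ} (hp : IsWeightedHomogeneous w p n)
    {S : Finset (σ →₀ ℕ)} (hS : ∀ d, Finsupp.weight w d = n → d ∈ S) :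
    p = ∑ d ∈ S, monomial d (coeff d p) := by
  conv_lhs => rw [p.as_sum]
  exact Finset.sum_subset (fun d hd => hS d (hp (mem_support_iff.mp hd)))
    fun d _ hd => by rw [notMem_support_iff.mp hd, monomial_zero]

theorem MvPolynomial.isWeightedHomogeneous_ofNat_s6 {σ R : Type*} [CommSemiring R] {w : σ → ℕ}
    (n : ℕ) [n.AtLeastTwo] : IsWeightedHomogeneous w (OfNat.ofNat n : MvPolynomial σ R) 0 := by
  rw [← map_ofNat C n]
  exact isWeightedHomogeneous_C w _

namespace E7D6

section Relations

variable {R : Type*} [CommRing R]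

def rel12 (y1 y4 y6 : R) : R :=
  3 * y6 ^ 2 - y4 ^ 3 - 3 * y1 ^ 4 * y4 ^ 2 - 2 * y1 ^ 6 * y6 + 2 * y1 ^ 8 * y4

def rel14 (y1 y4 y6 : R) : R :=
  3 * y4 ^ 2 * y6 + 3 * y1 ^ 2 * y6 ^ 2 + 6 * y1 ^ 2 * y4 ^ 3
    + 6 * y1 ^ 4 * y4 * y6 - 3 * y1 ^ 6 * y4 ^ 2 - 4 * y1 ^ 8 * y6
    - 2 * y1 ^ 10 * y4 + y1 ^ 14

def rel18 (y1 y4 y6 : R) : R :=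
  45 * y4 ^ 4 * y1 ^ 2 + 120 * y4 ^ 2 * y1 ^ 4 * y6 + 60 * y4 ^ 3 * y1 ^ 6
    - 52 * y4 ^ 2 * y1 ^ 10 - 16 * y1 ^ 6 * y6 ^ 2 + 80 * y1 ^ 8 * y6 * y4
    - 96 * y1 ^ 12 * y6 - 48 * y1 ^ 14 * y4 + 28 * y1 ^ 18 + 116 * y6 ^ 3
    + 180 * y1 ^ 2 * y4 * y6 ^ 2

variable {S F : Type*} [CommRing S] [FunLike F R S] [RingHomClass F R S]

theorem map_rel12 (f : F) (y1 y4 y6 : R) : f (rel12 y1 y4 y6) = rel12 (f y1) (f y4) (f y6) := by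
  simp [rel12, map_ofNat f]

theorem map_rel14 (f : F) (y1 y4 y6 : R) : f (rel14 y1 y4 y6) = rel14 (f y1) (f y4) (f y6) := by
  simp [rel14, map_ofNat f]

theorem map_rel18 (f : F) (y1 y4 y6 : R) : f (rel18 y1 y4 y6) = rel18 (f y1) (f y4) (f y6) := by
  simp [rel18, map_ofNat f]

end Relations

section Homogeneity

variable {σ R : Type*} [CommRing R] {w : σ → ℕ} {y1 y4 y6 : MvPolynomial σ R}

theorem isWeightedHomogeneous_rel12 (h1 : IsWeightedHomogeneous w y1 1)
    (h4 : IsWeightedHomogeneous w y4 4) (h6 : IsWeightedHomogeneous w y6 6) :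
    IsWeightedHomogeneous w (rel12 y1 y4 y6) 12 := by
  have c (n : ℕ) [n.AtLeastTwo] := isWeightedHomogeneous_ofNat_s6 (σ := σ) (R := R) (w := w) n
  unfold rel12
  with_reducible repeat' first | apply IsWeightedHomogeneous.sub | apply IsWeightedHomogeneous.add
  exacts [(c 3).mul (h6.pow 2), h4.pow 3, ((c 3).mul (h1.pow 4)).mul (h4.pow 2),
    ((c 2).mul (h1.pow 6)).mul h6, ((c 2).mul (h1.pow 8)).mul h4]

theorem isWeightedHomogeneous_rel14 (h1 : IsWeightedHomogeneous w y1 1)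
    (h4 : IsWeightedHomogeneous w y4 4) (h6 : IsWeightedHomogeneous w y6 6) :
    IsWeightedHomogeneous w (rel14 y1 y4 y6) 14 := by
  have c (n : ℕ) [n.AtLeastTwo] := isWeightedHomogeneous_ofNat_s6 (σ := σ) (R := R) (w := w) n
  unfold rel14
  with_reducible repeat' first | apply IsWeightedHomogeneous.sub | apply IsWeightedHomogeneous.add
  exacts [((c 3).mul (h4.pow 2)).mul h6, ((c 3).mul (h1.pow 2)).mul (h6.pow 2),
    ((c 6).mul (h1.pow 2)).mul (h4.pow 3), (((c 6).mul (h1.pow 4)).mul h4).mul h6,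
    ((c 3).mul (h1.pow 6)).mul (h4.pow 2), ((c 4).mul (h1.pow 8)).mul h6,
    ((c 2).mul (h1.pow 10)).mul h4, h1.pow 14]

theorem isWeightedHomogeneous_rel18 (h1 : IsWeightedHomogeneous w y1 1)
    (h4 : IsWeightedHomogeneous w y4 4) (h6 : IsWeightedHomogeneous w y6 6) :
    IsWeightedHomogeneous w (rel18 y1 y4 y6) 18 := by
  have c (n : ℕ) [n.AtLeastTwo] := isWeightedHomogeneous_ofNat_s6 (σ := σ) (R := R) (w := w) n
  unfold rel18
  with_reducible repeat' first | apply IsWeightedHomogeneous.sub | apply IsWeightedHomogeneous.add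
  exacts [((c 45).mul (h4.pow 4)).mul (h1.pow 2),
    (((c 120).mul (h4.pow 2)).mul (h1.pow 4)).mul h6, ((c 60).mul (h4.pow 3)).mul (h1.pow 6),
    ((c 52).mul (h4.pow 2)).mul (h1.pow 10), ((c 16).mul (h1.pow 6)).mul (h6.pow 2),
    (((c 80).mul (h1.pow 8)).mul h6).mul h4, ((c 96).mul (h1.pow 12)).mul h6,
    ((c 48).mul (h1.pow 14)).mul h4, (c 28).mul (h1.pow 18), (c 116).mul (h6.pow 3),
    (((c 180).mul (h1.pow 2)).mul h4).mul (h6.pow 2)]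

end Homogeneity

/-- Half the cohomological degrees of `y1, y4, y6`. -/
abbrev weights : Fin 3 → ℕ := ![1, 4, 6]

theorem weight_weights (d : Fin 3 →₀ ℕ) :
    Finsupp.weight weights d = d 0 + 4 * d 1 + 6 * d 2 := by
  simp [Finsupp.weight_apply, Finsupp.sum_fintype, Fin.sum_univ_three]
  ring

section Shapes

variable {R : Type*} [CommRing R] {p : MvPolynomial (Fin 3) R}

theorem exists_eq_C_of_isWeightedHomogeneous_zero (hp : IsWeightedHomogeneous weights p 0) :
    ∃ c, p = C c := by
  refine ⟨coeff 0 p, (hp.eq_sum_monomial (S := {0}) fun d hd => ?_).trans (by simp)⟩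
  rw [weight_weights] at hd
  rw [Finset.mem_singleton]
  ext i; fin_cases i <;> simp <;> omega

theorem exists_eq_C_mul_X_sq_of_isWeightedHomogeneous_two
    (hp : IsWeightedHomogeneous weights p 2) : ∃ c, p = C c * X 0 ^ 2 := by
  refine ⟨coeff (Finsupp.single 0 2) p,
    (hp.eq_sum_monomial (S := {Finsupp.single 0 2}) fun d hd => ?_).trans
      (by simp [C_mul_X_pow_eq_monomial])⟩
  rw [weight_weights] at hd
  rw [Finset.mem_singleton]
  ext i; fin_cases i <;> simp <;> omega

theorem exists_eq_of_isWeightedHomogeneous_four (hp : IsWeightedHomogeneous weights p 4) :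
    ∃ c c', p = C c * X 0 ^ 4 + C c' * X 1 := by
  refine ⟨coeff (Finsupp.single 0 4) p, coeff (Finsupp.single 1 1) p,
    (hp.eq_sum_monomial (S := {Finsupp.single 0 4, Finsupp.single 1 1}) fun d hd => ?_).trans ?_⟩
  · rw [weight_weights] at hd
    rw [Finset.mem_insert, Finset.mem_singleton]
    rcases (by omega : d 0 = 4 ∧ d 1 = 0 ∧ d 2 = 0 ∨ d 0 = 0 ∧ d 1 = 1 ∧ d 2 = 0) with h | h
    · left; ext i; fin_cases i <;> simp [h]
    · right; ext i; fin_cases i <;> simp [h]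
  · rw [Finset.sum_pair fun h => by simpa using congrArg (· 0) h, C_mul_X_pow_eq_monomial,
      C_mul_X_eq_monomial]

end Shapes

noncomputable def relIdeal : Ideal (MvPolynomial (Fin 3) ℚ) :=
  Ideal.span {rel12 (X 0) (X 1) (X 2), rel14 (X 0) (X 1) (X 2), rel18 (X 0) (X 1) (X 2)}

theorem exists_coeffs_of_mem_relIdeal {x : MvPolynomial (Fin 3) ℚ} {n : ℕ}
    (hx : IsWeightedHomogeneous weights x n) (hI : x ∈ relIdeal) :
    ∃ a : Fin 3 → MvPolynomial (Fin 3) ℚ,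
      (∀ s, IsWeightedHomogeneous weights (a s) (n - ![12, 14, 18] s)) ∧
      (∀ s, n < ![12, 14, 18] s → a s = 0) ∧
      x = a 0 * rel12 (X 0) (X 1) (X 2) + a 1 * rel14 (X 0) (X 1) (X 2)
        + a 2 * rel18 (X 0) (X 1) (X 2) := by
  let _ := weightedGradedAlgebra ℚ weights
  have hX (i : Fin 3) :
      IsWeightedHomogeneous weights (X i : MvPolynomial (Fin 3) ℚ) (weights i) :=
    isWeightedHomogeneous_X ℚ weights i
  have hrel (s : Fin 3) : IsWeightedHomogeneous weights
      (![rel12 (X 0) (X 1) (X 2), rel14 (X 0) (X 1) (X 2), rel18 (X 0) (X 1) (X 2)] s :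
        MvPolynomial (Fin 3) ℚ) (![12, 14, 18] s) := by
    fin_cases s
    exacts [isWeightedHomogeneous_rel12 (hX 0) (hX 1) (hX 2),
      isWeightedHomogeneous_rel14 (hX 0) (hX 1) (hX 2),
      isWeightedHomogeneous_rel18 (hX 0) (hX 1) (hX 2)]
  have hspan : x ∈ Ideal.span (Set.range (![rel12 (X 0) (X 1) (X 2), rel14 (X 0) (X 1) (X 2),
      rel18 (X 0) (X 1) (X 2)] : Fin 3 → MvPolynomial (Fin 3) ℚ)) := by
    rwa [Matrix.range_cons, Matrix.range_cons_cons_empty, Set.singleton_union]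
  obtain ⟨a, ha, ha0, hsum⟩ := exists_homogeneous_coeffs_of_mem_span
    (weightedHomogeneousSubmodule ℚ weights) hrel hx hspan
  exact ⟨a, ha, ha0, by simpa [Fin.sum_univ_three, add_assoc] using hsum⟩

theorem exists_eq_of_mem_relIdeal_twelve {x : MvPolynomial (Fin 3) ℚ}
    (hx : IsWeightedHomogeneous weights x 12) (hI : x ∈ relIdeal) :
    ∃ c, x = C c * rel12 (X 0) (X 1) (X 2) := by
  obtain ⟨a, ha, ha0, rfl⟩ := exists_coeffs_of_mem_relIdeal hx hI
  obtain ⟨c, hc⟩ := exists_eq_C_of_isWeightedHomogeneous_zero (ha 0)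
  exact ⟨c, by rw [hc, ha0 1 (by decide), ha0 2 (by decide)]; ring⟩

theorem exists_eq_of_mem_relIdeal_fourteen {x : MvPolynomial (Fin 3) ℚ}
    (hx : IsWeightedHomogeneous weights x 14) (hI : x ∈ relIdeal) :
    ∃ e d, x = C e * X 0 ^ 2 * rel12 (X 0) (X 1) (X 2) + C d * rel14 (X 0) (X 1) (X 2) := by
  obtain ⟨a, ha, ha0, rfl⟩ := exists_coeffs_of_mem_relIdeal hx hI
  obtain ⟨e, he⟩ := exists_eq_C_mul_X_sq_of_isWeightedHomogeneous_two (ha 0)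
  obtain ⟨d, hd⟩ := exists_eq_C_of_isWeightedHomogeneous_zero (ha 1)
  exact ⟨e, d, by rw [he, hd, ha0 2 (by decide)]; ring⟩

theorem exists_eq_of_mem_relIdeal_eighteen {x : MvPolynomial (Fin 3) ℚ}
    (hx : IsWeightedHomogeneous weights x 18) (hI : x ∈ relIdeal) :
    ∃ P q4 q04 r, x = P * rel12 (X 0) (X 1) (X 2)
      + (C q4 * X 0 ^ 4 + C q04 * X 1) * rel14 (X 0) (X 1) (X 2)
      + C r * rel18 (X 0) (X 1) (X 2) := by
  obtain ⟨a, ha, -, rfl⟩ := exists_coeffs_of_mem_relIdeal hx hI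
  obtain ⟨q4, q04, hq⟩ := exists_eq_of_isWeightedHomogeneous_four (ha 1)
  obtain ⟨r, hr⟩ := exists_eq_C_of_isWeightedHomogeneous_zero (ha 2)
  exact ⟨a 0, q4, q04, r, by rw [hq, hr]⟩

theorem eq_zero_of_rel_eq_zero {K : Type*} [Field K] [CharZero K] {k a b : K}
    (h12 : rel12 k a b = 0) (h14 : rel14 k a b = 0) (h18 : rel18 k a b = 0) :
    k = 0 ∧ a = 0 ∧ b = 0 := by
  unfold rel12 rel14 rel18 at *
  -- certificate from a Gröbner basis computation in `ℚ[k, a, b]`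
  have hk : k ^ 34 = 0 := by
    linear_combination
      (-4785907615 / 3 * k ^ 22 + 46329655580 / 3 * k ^ 18 * a - 29206631204 * k ^ 14 * a ^ 2
        - 38641211525 * k ^ 10 * a ^ 3 + 93108721095 * k ^ 6 * a ^ 4
        - 6859387980 * k ^ 2 * a ^ 5 + 39944009914 / 3 * k ^ 16 * b
        - 75577464434 * k ^ 12 * a * b + 68192056115 * k ^ 8 * a ^ 2 * b
        + 92860647120 * k ^ 4 * a ^ 3 * b - 8202979440 * a ^ 4 * b
        - 24876490696 * k ^ 10 * b ^ 2 + 87791954040 * k ^ 6 * a * b ^ 2) * h12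
      + (6501527649 * k ^ 20 - 58611972532 / 3 * k ^ 16 * a - 37279691684 * k ^ 12 * a ^ 2
        + 228872306435 / 3 * k ^ 8 * a ^ 3 + 26003475240 * k ^ 4 * a ^ 4 - 2734326480 * a ^ 5
        - 52468370762 / 3 * k ^ 14 * b + 49443331058 * k ^ 10 * a * b
        + 51314054205 * k ^ 6 * a ^ 2 * b - 3135046740 * k ^ 2 * a ^ 3 * b) * h14
      + (-232197416 * k ^ 16 + 878053878 * k ^ 12 * a + 432485790 * k ^ 8 * a ^ 2
        - 2320489665 * k ^ 4 * a ^ 3 + 212146020 * a ^ 4 + 643357518 * k ^ 10 * b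
        - 2270481570 * k ^ 6 * a * b) * h18
  obtain rfl : k = 0 := eq_zero_of_pow_eq_zero hk
  obtain rfl : b = 0 := eq_zero_of_pow_eq_zero (n := 3) (by linear_combination h18 / 116)
  obtain rfl : a = 0 := eq_zero_of_pow_eq_zero (n := 3) (by linear_combination -h12)
  exact ⟨rfl, rfl, rfl⟩

section Cases

variable {k a1 a2 b1 b2 b3 c d e : ℚ}

theorem adams_of_b3_ne_zero (hb3 : b3 ≠ 0)
    (H12 : ∀ x0 x1 x2 : ℚ, rel12 (k * x0) (a1 * x0 ^ 4 + a2 * x1)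
      (b1 * x0 ^ 6 + b2 * x0 ^ 2 * x1 + b3 * x2) = c * rel12 x0 x1 x2)
    (H14 : ∀ x0 x1 x2 : ℚ, rel14 (k * x0) (a1 * x0 ^ 4 + a2 * x1)
      (b1 * x0 ^ 6 + b2 * x0 ^ 2 * x1 + b3 * x2) =
        e * x0 ^ 2 * rel12 x0 x1 x2 + d * rel14 x0 x1 x2) :
    a1 = 0 ∧ b1 = 0 ∧ b2 = 0 ∧ a2 = k ^ 4 ∧ b3 = k ^ 6 := by
  simp only [rel12, rel14] at H12 H14
  have hc : c = b3 ^ 2 := by linear_combination -H12 0 0 1 / 3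
  have hca : c = a2 ^ 3 := by linear_combination H12 0 1 0
  have hd : d = a2 ^ 2 * b3 := by linear_combination -H14 0 1 1 / 3
  have hlin (s : ℚ) : b3 * (3 * (b1 + b2 * s) + b3 - k ^ 6) = 0 := by
    linear_combination (H12 1 s 1 - H12 1 s 0 + hc) / 2
  have hb2 : b2 = 0 := by
    have h0 := (mul_eq_zero.mp (hlin 0)).resolve_left hb3
    have h1 := (mul_eq_zero.mp (hlin 1)).resolve_left hb3
    linear_combination (h1 - h0) / 3
  subst hb2
  have ha2 : a2 ≠ 0 := by
    rintro rfl
    exact hb3 (eq_zero_of_pow_eq_zero (n := 2) (by linear_combination hca - hc))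
  -- finite differences on the plane `x0 = 1` pick out the coefficients of `x2 ^ 2`, `x1 * x2`, `x2`
  have he : e = k ^ 2 * b3 ^ 2 - d := by
    linear_combination -(H14 1 0 1 + H14 1 0 (-1) - 2 * H14 1 0 0) / 6
  have hst : a2 * b3 * (a1 + k ^ 4 - a2) = 0 := by
    linear_combination (H14 1 1 1 - H14 1 1 (-1) - H14 1 (-1) 1 + H14 1 (-1) (-1)) / 24 + hd
  obtain rfl : a2 = a1 + k ^ 4 := by
    linear_combination -(mul_eq_zero.mp hst).resolve_left (mul_ne_zero ha2 hb3)
  obtain rfl : b3 = k ^ 6 - 3 * b1 := by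
    linear_combination (mul_eq_zero.mp (hlin 0)).resolve_left hb3
  subst hd he
  have hquad : (k ^ 6 - 3 * b1) * (5 * a1 * (a1 + 2 * k ^ 4)) = 0 := by
    linear_combination (H14 1 0 1 - H14 1 0 (-1)) / 2
  rcases mul_eq_zero.mp ((mul_eq_zero.mp hquad).resolve_left hb3) with ha1 | ha1
  · obtain rfl : a1 = 0 := by linear_combination ha1 / 5
    have hb1 : b1 * (3 * b1 - 2 * k ^ 6) = 0 := by linear_combination (hca - hc) / 3
    rcases mul_eq_zero.mp hb1 with rfl | hb1
    · exact ⟨rfl, rfl, rfl, by ring, by ring⟩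
    · obtain rfl : b1 = 2 / 3 * k ^ 6 := by linear_combination hb1 / 3
      obtain rfl : k = 0 :=
        eq_zero_of_pow_eq_zero (n := 14) (by linear_combination 3 / 2 * H14 1 0 0)
      exact absurd (by ring) hb3
  · obtain rfl : a1 = -2 * k ^ 4 := by linear_combination ha1
    have hsq : (k ^ 6 - 3 * b1) ^ 2 + (k ^ 6) ^ 2 = 0 := by linear_combination hca - hc
    exact (hb3 (eq_zero_of_pow_eq_zero
      ((add_eq_zero_iff_of_nonneg (sq_nonneg _) (sq_nonneg _)).mp hsq).1)).elim

theorem adams_of_b3_eq_zero {q4 q04 r : ℚ} {P : ℚ → ℚ → ℚ → ℚ} (hb3 : b3 = 0)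
    (H12 : ∀ x0 x1 x2 : ℚ, rel12 (k * x0) (a1 * x0 ^ 4 + a2 * x1)
      (b1 * x0 ^ 6 + b2 * x0 ^ 2 * x1 + b3 * x2) = c * rel12 x0 x1 x2)
    (H14 : ∀ x0 x1 x2 : ℚ, rel14 (k * x0) (a1 * x0 ^ 4 + a2 * x1)
      (b1 * x0 ^ 6 + b2 * x0 ^ 2 * x1 + b3 * x2) =
        e * x0 ^ 2 * rel12 x0 x1 x2 + d * rel14 x0 x1 x2)
    (H18 : ∀ x0 x1 x2 : ℚ, rel18 (k * x0) (a1 * x0 ^ 4 + a2 * x1)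
      (b1 * x0 ^ 6 + b2 * x0 ^ 2 * x1 + b3 * x2) =
        P x0 x1 x2 * rel12 x0 x1 x2 + (q4 * x0 ^ 4 + q04 * x1) * rel14 x0 x1 x2
          + r * rel18 x0 x1 x2) :
    a1 = 0 ∧ b1 = 0 ∧ b2 = 0 ∧ a2 = k ^ 4 ∧ b3 = k ^ 6 := by
  subst hb3
  simp only [rel12, rel14, rel18] at H12 H14 H18
  obtain rfl : c = 0 := by linear_combination -H12 0 0 1 / 3
  obtain rfl : a2 = 0 := eq_zero_of_pow_eq_zero (n := 3) (by linear_combination -H12 0 1 0)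
  obtain rfl : b2 = 0 := eq_zero_of_pow_eq_zero (n := 2)
    (by linear_combination (H12 1 1 0 + H12 1 (-1) 0 - 2 * H12 1 0 0) / 6)
  obtain rfl : d = 0 := by linear_combination -H14 0 1 1 / 3
  have h12 : rel12 k a1 b1 = 0 := by simpa [rel12] using H12 1 0 0
  have h14 : rel14 k a1 b1 = 0 := by simpa [rel14] using H14 1 0 0
  -- The three points lie on `rel12 = 0` and `rel14` vanishes at the last one; this is `y1¹⁸ ∉ I`.
  have h18 : rel18 k a1 b1 = 0 := by
    simp only [rel18]
    linarith [H18 1 0 0, H18 1 0 (2 / 3), H18 1 (1 / 3) (2 / 9)]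
  obtain ⟨rfl, rfl, rfl⟩ := eq_zero_of_rel_eq_zero h12 h14 h18
  norm_num

end Cases

end E7D6

open E7D6

/-- Rigidity computation for `X = E₇/D₆·S¹`. -/
theorem E7_D6_rigidity (k a1 a2 b1 b2 b3 : ℚ)
    (y1 y4 y6 g12 g14 g18 : MvPolynomial (Fin 3) ℚ)
    (hy1 : y1 = X 0) (hy4 : y4 = X 1) (hy6 : y6 = X 2)
    (hg12 : g12 = 3 * y6 ^ 2 - y4 ^ 3 - 3 * y1 ^ 4 * y4 ^ 2 - 2 * y1 ^ 6 * y6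
      + 2 * y1 ^ 8 * y4)
    (hg14 : g14 = 3 * y4 ^ 2 * y6 + 3 * y1 ^ 2 * y6 ^ 2 + 6 * y1 ^ 2 * y4 ^ 3
      + 6 * y1 ^ 4 * y4 * y6 - 3 * y1 ^ 6 * y4 ^ 2 - 4 * y1 ^ 8 * y6
      - 2 * y1 ^ 10 * y4 + y1 ^ 14)
    (hg18 : g18 = 45 * y4 ^ 4 * y1 ^ 2 + 120 * y4 ^ 2 * y1 ^ 4 * y6 + 60 * y4 ^ 3 * y1 ^ 6
      - 52 * y4 ^ 2 * y1 ^ 10 - 16 * y1 ^ 6 * y6 ^ 2 + 80 * y1 ^ 8 * y6 * y4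
      - 96 * y1 ^ 12 * y6 - 48 * y1 ^ 14 * y4 + 28 * y1 ^ 18 + 116 * y6 ^ 3
      + 180 * y1 ^ 2 * y4 * y6 ^ 2)
    (I : Ideal (MvPolynomial (Fin 3) ℚ)) (hI : I = Ideal.span {g12, g14, g18})
    (φ : MvPolynomial (Fin 3) ℚ →ₐ[ℚ] MvPolynomial (Fin 3) ℚ)
    (hφ1 : φ y1 = C k * y1)
    (hφ4 : φ y4 = C a1 * y1 ^ 4 + C a2 * y4)
    (hφ6 : φ y6 = C b1 * y1 ^ 6 + C b2 * y1 ^ 2 * y4 + C b3 * y6)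
    (h12 : φ g12 ∈ I) (h14 : φ g14 ∈ I) (h18 : φ g18 ∈ I) :
    a1 = 0 ∧ b1 = 0 ∧ b2 = 0 ∧ a2 = k ^ 4 ∧ b3 = k ^ 6 := by
  subst hy1 hy4 hy6
  obtain rfl : g12 = rel12 (X 0) (X 1) (X 2) := hg12
  obtain rfl : g14 = rel14 (X 0) (X 1) (X 2) := hg14
  obtain rfl : g18 = rel18 (X 0) (X 1) (X 2) := hg18
  obtain rfl : I = relIdeal := hI
  rw [map_rel12, hφ1, hφ4, hφ6] at h12
  rw [map_rel14, hφ1, hφ4, hφ6] at h14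
  rw [map_rel18, hφ1, hφ4, hφ6] at h18
  have hX (i : Fin 3) := isWeightedHomogeneous_X ℚ weights i
  have h1 : IsWeightedHomogeneous weights (C k * X 0) 1 := (hX 0).C_mul k
  have h4 : IsWeightedHomogeneous weights (C a1 * X 0 ^ 4 + C a2 * X 1) 4 :=
    (((hX 0).pow 4).C_mul a1).add ((hX 1).C_mul a2)
  have h6 : IsWeightedHomogeneous weights
      (C b1 * X 0 ^ 6 + C b2 * X 0 ^ 2 * X 1 + C b3 * X 2) 6 :=
    ((((hX 0).pow 6).C_mul b1).add ((((hX 0).pow 2).C_mul b2).mul (hX 1))).add ((hX 2).C_mul b3)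
  obtain ⟨c, hc⟩ := exists_eq_of_mem_relIdeal_twelve (isWeightedHomogeneous_rel12 h1 h4 h6) h12
  obtain ⟨e, d, hed⟩ :=
    exists_eq_of_mem_relIdeal_fourteen (isWeightedHomogeneous_rel14 h1 h4 h6) h14
  obtain ⟨P, q4, q04, r, hP⟩ :=
    exists_eq_of_mem_relIdeal_eighteen (isWeightedHomogeneous_rel18 h1 h4 h6) h18
  have H12 (x0 x1 x2 : ℚ) := congrArg (eval ![x0, x1, x2]) hc
  have H14 (x0 x1 x2 : ℚ) := congrArg (eval ![x0, x1, x2]) hed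
  have H18 (x0 x1 x2 : ℚ) := congrArg (eval ![x0, x1, x2]) hP
  simp only [map_rel12, map_rel14, map_rel18, map_mul, map_add, map_pow, eval_C, eval_X,
    Matrix.cons_val_zero, Matrix.cons_val_one, Matrix.cons_val_two, Matrix.head_cons,
    Matrix.tail_cons] at H12 H14 H18
  rcases eq_or_ne b3 0 with hb3 | hb3
  · exact adams_of_b3_eq_zero hb3 H12 H14 H18
  · exact adams_of_b3_ne_zero hb3 H12 H14
end

section
/- In ℚ[y1,y4], the ideal I = ⟨g8, g12⟩ is equal to the ideal generated by the three polynomials 24*y4^2 + y1^8 − 12*y1^4*y4, 3*y1^4*y4^2 − 28*y4^3, and y4^4. (This is the Gröbner-basis computation for the ideal of relations of H*(F4/C3·S1;ℚ) with respect to the order y1 > y4.) -/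
/-!
Write `f = 24y₄² + y₁⁸ − 12y₁⁴y₄`, `h = 3y₁⁴y₄² − 28y₄³` and `k = y₄⁴`. The identities
`g₁₂ = (y₁⁴ − 12y₄) f − 8h`, `8h = (y₁⁴ − 12y₄) f − g₁₂` and
`64k = (3y₁⁸ − 44y₁⁴y₄ + 24y₄²) f − (3y₁⁴ − 8y₄) g₁₂`
show that each generating set lies in the ideal spanned by the other, as soon as `2` is invertible.
-/

open MvPolynomial

section Groebner

variable {R : Type*} [CommRing R] (a b : R)

theorem mem_of_eq_mul_add_mul {I : Ideal R} {x y z : R} (hx : x ∈ I) (hy : y ∈ I) (c d : R)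
    (hz : z = c * x + d * y) : z ∈ I :=
  hz ▸ I.add_mem (I.mul_mem_left c hx) (I.mul_mem_left d hy)

theorem span_g8_g12_le :
    Ideal.span {24 * b ^ 2 + a ^ 8 - 12 * a ^ 4 * b,
        a ^ 12 - 24 * a ^ 8 * b + 144 * a ^ 4 * b ^ 2 - 64 * b ^ 3} ≤
      Ideal.span {24 * b ^ 2 + a ^ 8 - 12 * a ^ 4 * b, 3 * a ^ 4 * b ^ 2 - 28 * b ^ 3, b ^ 4} := by
  set J : Ideal R :=
    Ideal.span {24 * b ^ 2 + a ^ 8 - 12 * a ^ 4 * b, 3 * a ^ 4 * b ^ 2 - 28 * b ^ 3, b ^ 4}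
  have hf : 24 * b ^ 2 + a ^ 8 - 12 * a ^ 4 * b ∈ J := Ideal.subset_span (by simp)
  have hh : 3 * a ^ 4 * b ^ 2 - 28 * b ^ 3 ∈ J := Ideal.subset_span (by simp)
  have hg : a ^ 12 - 24 * a ^ 8 * b + 144 * a ^ 4 * b ^ 2 - 64 * b ^ 3 ∈ J :=
    mem_of_eq_mul_add_mul hf hh (a ^ 4 - 12 * b) (-8) (by ring)
  simpa [Ideal.span_le, Set.insert_subset_iff] using ⟨hf, hg⟩

theorem groebner_le_span_g8_g12 (h2 : IsUnit (2 : R)) :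
    Ideal.span {24 * b ^ 2 + a ^ 8 - 12 * a ^ 4 * b, 3 * a ^ 4 * b ^ 2 - 28 * b ^ 3, b ^ 4} ≤
      Ideal.span {24 * b ^ 2 + a ^ 8 - 12 * a ^ 4 * b,
        a ^ 12 - 24 * a ^ 8 * b + 144 * a ^ 4 * b ^ 2 - 64 * b ^ 3} := by
  set J : Ideal R := Ideal.span {24 * b ^ 2 + a ^ 8 - 12 * a ^ 4 * b,
    a ^ 12 - 24 * a ^ 8 * b + 144 * a ^ 4 * b ^ 2 - 64 * b ^ 3}
  have hf : 24 * b ^ 2 + a ^ 8 - 12 * a ^ 4 * b ∈ J := Ideal.subset_span (by simp)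
  have hg : a ^ 12 - 24 * a ^ 8 * b + 144 * a ^ 4 * b ^ 2 - 64 * b ^ 3 ∈ J :=
    Ideal.subset_span (by simp)
  have h8 : IsUnit (8 : R) := by simpa [show (2 : R) ^ 3 = 8 by norm_num] using h2.pow 3
  have h64 : IsUnit (64 : R) := by simpa [show (2 : R) ^ 6 = 64 by norm_num] using h2.pow 6
  have hh : 3 * a ^ 4 * b ^ 2 - 28 * b ^ 3 ∈ J :=
    (J.unit_mul_mem_iff_mem h8).1 <| mem_of_eq_mul_add_mul hf hg (a ^ 4 - 12 * b) (-1) (by ring)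
  have hk : b ^ 4 ∈ J :=
    (J.unit_mul_mem_iff_mem h64).1 <| mem_of_eq_mul_add_mul hf hg
      (3 * a ^ 8 - 44 * a ^ 4 * b + 24 * b ^ 2) (-3 * a ^ 4 + 8 * b) (by ring)
  simpa [Ideal.span_le, Set.insert_subset_iff] using ⟨hf, hh, hk⟩

theorem span_g8_g12_eq_groebner (h2 : IsUnit (2 : R)) :
    Ideal.span {24 * b ^ 2 + a ^ 8 - 12 * a ^ 4 * b,
        a ^ 12 - 24 * a ^ 8 * b + 144 * a ^ 4 * b ^ 2 - 64 * b ^ 3} =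
      Ideal.span {24 * b ^ 2 + a ^ 8 - 12 * a ^ 4 * b, 3 * a ^ 4 * b ^ 2 - 28 * b ^ 3, b ^ 4} :=
  le_antisymm (span_g8_g12_le a b) (groebner_le_span_g8_g12 a b h2)

end Groebner

theorem F4_C3_groebner_general
    (y1 y4 g8 g12 : MvPolynomial (Fin 2) ℚ)
    (hg8 : g8 = 24 * y4 ^ 2 + y1 ^ 8 - 12 * y1 ^ 4 * y4)
    (hg12 : g12 = y1 ^ 12 - 24 * y1 ^ 8 * y4 + 144 * y1 ^ 4 * y4 ^ 2 - 64 * y4 ^ 3)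
    (I : Ideal (MvPolynomial (Fin 2) ℚ)) (hI : I = Ideal.span {g8, g12}) :
    I = Ideal.span {24 * y4 ^ 2 + y1 ^ 8 - 12 * y1 ^ 4 * y4,
      3 * y1 ^ 4 * y4 ^ 2 - 28 * y4 ^ 3, y4 ^ 4} := by
  subst hg8 hg12 hI
  have h2 : IsUnit (2 : MvPolynomial (Fin 2) ℚ) :=
    map_ofNat (C : ℚ →+* MvPolynomial (Fin 2) ℚ) 2 ▸ (isUnit_of_invertible (2 : ℚ)).map C
  exact span_g8_g12_eq_groebner y1 y4 h2

/-- Gröbner-basis computation for the ideal of relations of `H^*(F₄/C₃·S¹;ℚ)`: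
`⟨g₈, g₁₂⟩ = ⟨24y₄² + y₁⁸ − 12y₁⁴y₄, 3y₁⁴y₄² − 28y₄³, y₄⁴⟩`. -/
theorem F4_C3_groebner
    (y1 y4 g8 g12 : MvPolynomial (Fin 2) ℚ)
    (hy1 : y1 = X 0) (hy4 : y4 = X 1)
    (hg8 : g8 = 24 * y4 ^ 2 + y1 ^ 8 - 12 * y1 ^ 4 * y4)
    (hg12 : g12 = y1 ^ 12 - 24 * y1 ^ 8 * y4 + 144 * y1 ^ 4 * y4 ^ 2 - 64 * y4 ^ 3)
    (I : Ideal (MvPolynomial (Fin 2) ℚ)) (hI : I = Ideal.span {g8, g12}) :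
    I = Ideal.span {24 * y4 ^ 2 + y1 ^ 8 - 12 * y1 ^ 4 * y4,
      3 * y1 ^ 4 * y4 ^ 2 - 28 * y4 ^ 3, y4 ^ 4} :=
  F4_C3_groebner_general y1 y4 g8 g12 hg8 hg12 I hI
end

section
/- In ℚ[y1,y4], the ideal I = ⟨g8, g12⟩ is equal to the ideal generated by the three polynomials y1^8 − 3*y4^2, 15*y4^2*y1^4 − 26*y4^3, and y4^4. (This is the Gröbner-basis computation for the ideal of relations of H*(F4/B3·S1;ℚ) with respect to the order y1 > y4.) -/
/-!
Writing `a = y₁⁴` and `b = y₄`, the generators are `g₈ = 3b² − a²` and `g₁₂ = 26b³ − 5a³`, and the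
claim is a polynomial identity in `a, b` valid over any commutative ring. The first two Gröbner
basis elements are `−g₈` and `5a·g₈ − g₁₂`; the only real content is that `b⁴` already lies in
`⟨g₈, g₁₂⟩`, which is what the Gröbner basis computation uncovers.
-/

open MvPolynomial

section

variable {R : Type*} [CommRing R]

theorem pow_four_mem_span_relations (a b : R) :
    b ^ 4 ∈ Ideal.span {3 * b ^ 2 - a ^ 2, 26 * b ^ 3 - 5 * a ^ 3} :=
  Ideal.mem_span_pair.2 ⟨-225 * b ^ 2 - 75 * a ^ 2 - 130 * a * b, 15 * a + 26 * b, by ring⟩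

theorem span_relations_eq_span_groebner (a b : R) :
    Ideal.span {3 * b ^ 2 - a ^ 2, 26 * b ^ 3 - 5 * a ^ 3} =
      Ideal.span {a ^ 2 - 3 * b ^ 2, 15 * b ^ 2 * a - 26 * b ^ 3, b ^ 4} := by
  refine le_antisymm (Ideal.span_le.2 ?_) (Ideal.span_le.2 ?_)
  · simp only [Set.insert_subset_iff, Set.singleton_subset_iff, SetLike.mem_coe, Ideal.span,
      Submodule.mem_span_triple, smul_eq_mul]
    exact ⟨⟨-1, 0, 0, by ring⟩, ⟨-5 * a, -1, 0, by ring⟩⟩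
  · simp only [Set.insert_subset_iff, Set.singleton_subset_iff, SetLike.mem_coe]
    exact ⟨Ideal.mem_span_pair.2 ⟨-1, 0, by ring⟩, Ideal.mem_span_pair.2 ⟨5 * a, -1, by ring⟩,
      pow_four_mem_span_relations a b⟩

end

theorem F4_B3_groebner_general
    (y1 y4 g8 g12 : MvPolynomial (Fin 2) ℚ)
    (hg8 : g8 = 3 * y4 ^ 2 - y1 ^ 8)
    (hg12 : g12 = 26 * y4 ^ 3 - 5 * y1 ^ 12)
    (I : Ideal (MvPolynomial (Fin 2) ℚ)) (hI : I = Ideal.span {g8, g12}) :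
    I = Ideal.span {y1 ^ 8 - 3 * y4 ^ 2, 15 * y4 ^ 2 * y1 ^ 4 - 26 * y4 ^ 3, y4 ^ 4} := by
  subst hg8 hg12 hI
  have h := span_relations_eq_span_groebner (y1 ^ 4) y4
  rw [← pow_mul, ← pow_mul] at h
  exact h

/-- Gröbner-basis computation for the ideal of relations of `H^*(F₄/B₃·S¹;ℚ)`:
`⟨g₈, g₁₂⟩ = ⟨y₁⁸ − 3y₄², 15y₄²y₁⁴ − 26y₄³, y₄⁴⟩`. -/
theorem F4_B3_groebner
    (y1 y4 g8 g12 : MvPolynomial (Fin 2) ℚ)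
    (hy1 : y1 = X 0) (hy4 : y4 = X 1)
    (hg8 : g8 = 3 * y4 ^ 2 - y1 ^ 8)
    (hg12 : g12 = 26 * y4 ^ 3 - 5 * y1 ^ 12)
    (I : Ideal (MvPolynomial (Fin 2) ℚ)) (hI : I = Ideal.span {g8, g12}) :
    I = Ideal.span {y1 ^ 8 - 3 * y4 ^ 2, 15 * y4 ^ 2 * y1 ^ 4 - 26 * y4 ^ 3, y4 ^ 4} :=
  F4_B3_groebner_general y1 y4 g8 g12 hg8 hg12 I hI
end

section
/- In ℚ[y1,y4], the ideal I = ⟨g9, g12⟩ is equal to the ideal generated by the six polynomials 2*y1^9 + 3*y1*y4^2 − 6*y1^5*y4, 6*y4*y1^8 − 15*y1^4*y4^2 + 2*y4^3, 3*y4^2*y1^5 − 7*y4^3*y1, y4^3*y1^4 − 2*y4^4, y4^4*y1, and y4^5. (This is the Gröbner-basis computation for the ideal of relations of H*(E6/D5·S1;ℚ) with respect to the order y1 > y4.) -/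
open MvPolynomial

section

variable {R : Type*} [CommRing R] (a b : R)

/- The cofactors `c₉, c₁₂` with `c₉ g₉ + c₁₂ g₁₂` equal to each basis element are recorded
from Buchberger's algorithm, each new element being a reduced S-polynomial of earlier ones. -/
theorem span_groebner_le_span_pair :
    Ideal.span {2 * a ^ 9 + 3 * a * b ^ 2 - 6 * a ^ 5 * b,
      6 * b * a ^ 8 - 15 * a ^ 4 * b ^ 2 + 2 * b ^ 3,
      3 * b ^ 2 * a ^ 5 - 7 * b ^ 3 * a,
      b ^ 3 * a ^ 4 - 2 * b ^ 4, b ^ 4 * a, b ^ 5} ≤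
    Ideal.span {2 * a ^ 9 + 3 * a * b ^ 2 - 6 * a ^ 5 * b, b ^ 3 - 6 * a ^ 4 * b ^ 2 + a ^ 12} := by
  simp only [Ideal.span_le, Set.insert_subset_iff, Set.singleton_subset_iff, SetLike.mem_coe,
    Ideal.mem_span_pair]
  exact ⟨⟨1, 0, by ring⟩, ⟨-a ^ 3, 2, by ring⟩, ⟨-(a ^ 4 + 3 * b), 2 * a, by ring⟩,
    ⟨-(2 * a ^ 7 + 5 * a ^ 3 * b), 4 * a ^ 4 - 2 * b, by ring⟩,
    ⟨-(6 * a ^ 8 + 14 * a ^ 4 * b - 3 * b ^ 2), 12 * a ^ 5 - 8 * a * b, by ring⟩,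
    ⟨-(3 * a ^ 11 + 6 * a ^ 7 * b - 4 * a ^ 3 * b ^ 2), 6 * a ^ 8 - 6 * a ^ 4 * b + b ^ 2,
      by ring⟩⟩

theorem span_pair_le_span_groebner [Invertible (2 : R)] :
    Ideal.span {2 * a ^ 9 + 3 * a * b ^ 2 - 6 * a ^ 5 * b, b ^ 3 - 6 * a ^ 4 * b ^ 2 + a ^ 12} ≤
    Ideal.span {2 * a ^ 9 + 3 * a * b ^ 2 - 6 * a ^ 5 * b,
      6 * b * a ^ 8 - 15 * a ^ 4 * b ^ 2 + 2 * b ^ 3,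
      3 * b ^ 2 * a ^ 5 - 7 * b ^ 3 * a,
      b ^ 3 * a ^ 4 - 2 * b ^ 4, b ^ 4 * a, b ^ 5} := by
  simp only [Ideal.span_le, Set.insert_subset_iff, Set.singleton_subset_iff, SetLike.mem_coe]
  refine ⟨Ideal.subset_span (by simp), ?_⟩
  rw [← invOf_mul_cancel_left (2 : R) (b ^ 3 - 6 * a ^ 4 * b ^ 2 + a ^ 12),
    show 2 * (b ^ 3 - 6 * a ^ 4 * b ^ 2 + a ^ 12) =
      a ^ 3 * (2 * a ^ 9 + 3 * a * b ^ 2 - 6 * a ^ 5 * b) +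
        (6 * b * a ^ 8 - 15 * a ^ 4 * b ^ 2 + 2 * b ^ 3) by ring]
  exact Ideal.mul_mem_left _ _ <| Ideal.add_mem _
    (Ideal.mul_mem_left _ _ (Ideal.subset_span (by simp))) (Ideal.subset_span (by simp))

end

theorem E6_D5_groebner_general
    (y1 y4 g9 g12 : MvPolynomial (Fin 2) ℚ)
    (hg9 : g9 = 2 * y1 ^ 9 + 3 * y1 * y4 ^ 2 - 6 * y1 ^ 5 * y4)
    (hg12 : g12 = y4 ^ 3 - 6 * y1 ^ 4 * y4 ^ 2 + y1 ^ 12)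
    (I : Ideal (MvPolynomial (Fin 2) ℚ)) (hI : I = Ideal.span {g9, g12}) :
    I = Ideal.span {2 * y1 ^ 9 + 3 * y1 * y4 ^ 2 - 6 * y1 ^ 5 * y4,
      6 * y4 * y1 ^ 8 - 15 * y1 ^ 4 * y4 ^ 2 + 2 * y4 ^ 3,
      3 * y4 ^ 2 * y1 ^ 5 - 7 * y4 ^ 3 * y1,
      y4 ^ 3 * y1 ^ 4 - 2 * y4 ^ 4, y4 ^ 4 * y1, y4 ^ 5} := by
  subst hg9 hg12 hI
  let : Invertible (2 : MvPolynomial (Fin 2) ℚ) :=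
    (Invertible.map (C : ℚ →+* MvPolynomial (Fin 2) ℚ) 2).copy 2 (map_ofNat C 2).symm
  exact le_antisymm (span_pair_le_span_groebner y1 y4) (span_groebner_le_span_pair y1 y4)

/-- Gröbner-basis computation for the ideal of relations of `H^*(E₆/D₅·S¹;ℚ)`. -/
theorem E6_D5_groebner
    (y1 y4 g9 g12 : MvPolynomial (Fin 2) ℚ)
    (hy1 : y1 = X 0) (hy4 : y4 = X 1)
    (hg9 : g9 = 2 * y1 ^ 9 + 3 * y1 * y4 ^ 2 - 6 * y1 ^ 5 * y4)
    (hg12 : g12 = y4 ^ 3 - 6 * y1 ^ 4 * y4 ^ 2 + y1 ^ 12)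
    (I : Ideal (MvPolynomial (Fin 2) ℚ)) (hI : I = Ideal.span {g9, g12}) :
    I = Ideal.span {2 * y1 ^ 9 + 3 * y1 * y4 ^ 2 - 6 * y1 ^ 5 * y4,
      6 * y4 * y1 ^ 8 - 15 * y1 ^ 4 * y4 ^ 2 + 2 * y4 ^ 3,
      3 * y4 ^ 2 * y1 ^ 5 - 7 * y4 ^ 3 * y1,
      y4 ^ 3 * y1 ^ 4 - 2 * y4 ^ 4, y4 ^ 4 * y1, y4 ^ 5} :=
  E6_D5_groebner_general y1 y4 g9 g12 hg9 hg12 I hI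
end

section
/- Let k, a, b ∈ ℚ and let φ : ℚ[y1,y4] → ℚ[y1,y4] be the ℚ-algebra endomorphism with φ(y1) = k*y1 and φ(y4) = a*y1^4 + b*y4. Set h8 = 12*(24*a^2 + k^8 − 12*k^4*a + 4*b*a − k^4*b)*y1^4*y4 + 12*(−48*a^2 + 24*k^4*a − 2*k^8 + 2*b^2)*y4^2 and h12 = −(−1344*k^4*b^2 + 1792*b^2*a − 832*k^12 + 53248*a^3 − 25344*k^4*b*a + 64*b^3 − 119808*k^4*a^2 + 19968*k^8*a + 2112*k^8*b + 16896*b*a^2)*y4^3. Then φ(g8) − h8 ∈ I and φ(g12) − h12 ∈ I. (These are the residues of φ(g8) and φ(g12) modulo the ideal of relations of H*(F4/C3·S1;ℚ).) -/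
/-!
In the variables `u = y1^4`, `v = y4` the relations `g8`, `g12` are binary forms of degrees 2 and 3,
and `φ` acts on them by the linear substitution `(u, v) ↦ (k^4 u, a u + b v)`. Both residues are
therefore polynomial identities between binary forms over any commutative ring: the quadratic
is reduced by subtracting its `u^2`-coefficient times `g8`, and in degree 3 the forms `u g8`,
`v g8`, `g12` together with `v^3` are a basis of the cubic forms (the determinant is `-24`),
so `φ(g12)` is congruent to a unique multiple of `v^3`.
-/

open MvPolynomial

section BinaryForms

variable {R : Type*} [CommRing R]

def relQuadratic (u v : R) : R := u ^ 2 - 12 * u * v + 24 * v ^ 2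

def relCubic (u v : R) : R := u ^ 3 - 24 * u ^ 2 * v + 144 * u * v ^ 2 - 64 * v ^ 3

variable {S F : Type*} [CommRing S] [FunLike F R S] [RingHomClass F R S]

theorem map_relQuadratic (f : F) (u v : R) :
    f (relQuadratic u v) = relQuadratic (f u) (f v) := by
  simp only [relQuadratic, map_add, map_sub, map_mul, map_pow, map_ofNat]

theorem map_relCubic (f : F) (u v : R) : f (relCubic u v) = relCubic (f u) (f v) := by
  simp only [relCubic, map_add, map_sub, map_mul, map_pow, map_ofNat]

theorem relQuadratic_linear_subst (K a b u v : R) :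
    relQuadratic (K * u) (a * u + b * v)
      = (24 * a ^ 2 - 12 * K * a + K ^ 2) * relQuadratic u v
        + 12 * (24 * a ^ 2 + K ^ 2 - 12 * K * a + 4 * b * a - K * b) * u * v
        + 12 * (-48 * a ^ 2 + 24 * K * a - 2 * K ^ 2 + 2 * b ^ 2) * v ^ 2 := by
  unfold relQuadratic
  ring

theorem relCubic_linear_subst (K a b u v : R) :
    relCubic (K * u) (a * u + b * v)
      = ((96 * a * b ^ 2 - 72 * K * b ^ 2 + 960 * a ^ 2 * b - 1440 * K * a * b + 120 * K ^ 2 * b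
            + 3072 * a ^ 3 - 6912 * K * a ^ 2 + 1152 * K ^ 2 * a - 48 * K ^ 3) * v
          + (-8 * a * b ^ 2 + 6 * K * b ^ 2 - 96 * a ^ 2 * b + 144 * K * a * b - 12 * K ^ 2 * b
            - 384 * a ^ 3 + 864 * K * a ^ 2 - 144 * K ^ 2 * a + 6 * K ^ 3) * u)
          * relQuadratic u v
        + (8 * a * b ^ 2 - 6 * K * b ^ 2 + 96 * a ^ 2 * b - 144 * K * a * b + 12 * K ^ 2 * b
            + 320 * a ^ 3 - 720 * K * a ^ 2 + 120 * K ^ 2 * a - 5 * K ^ 3) * relCubic u v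
        - (-1344 * K * b ^ 2 + 1792 * b ^ 2 * a - 832 * K ^ 3 + 53248 * a ^ 3
            - 25344 * K * b * a + 64 * b ^ 3 - 119808 * K * a ^ 2 + 19968 * K ^ 2 * a
            + 2112 * K ^ 2 * b + 16896 * b * a ^ 2) * v ^ 3 := by
  unfold relQuadratic relCubic
  ring

end BinaryForms

theorem F4_C3_residues_general (k a b : ℚ)
    (y1 y4 g8 g12 h8 h12 : MvPolynomial (Fin 2) ℚ)
    (hg8 : g8 = 24 * y4 ^ 2 + y1 ^ 8 - 12 * y1 ^ 4 * y4)
    (hg12 : g12 = y1 ^ 12 - 24 * y1 ^ 8 * y4 + 144 * y1 ^ 4 * y4 ^ 2 - 64 * y4 ^ 3)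
    (I : Ideal (MvPolynomial (Fin 2) ℚ)) (hI : I = Ideal.span {g8, g12})
    (φ : MvPolynomial (Fin 2) ℚ →ₐ[ℚ] MvPolynomial (Fin 2) ℚ)
    (hφ1 : φ y1 = C k * y1)
    (hφ4 : φ y4 = C a * y1 ^ 4 + C b * y4)
    (hh8 : h8 = C (12 * (24 * a ^ 2 + k ^ 8 - 12 * k ^ 4 * a + 4 * b * a - k ^ 4 * b))
        * y1 ^ 4 * y4
      + C (12 * (-48 * a ^ 2 + 24 * k ^ 4 * a - 2 * k ^ 8 + 2 * b ^ 2)) * y4 ^ 2)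
    (hh12 : h12 = C (-(-1344 * k ^ 4 * b ^ 2 + 1792 * b ^ 2 * a - 832 * k ^ 12
        + 53248 * a ^ 3 - 25344 * k ^ 4 * b * a + 64 * b ^ 3 - 119808 * k ^ 4 * a ^ 2
        + 19968 * k ^ 8 * a + 2112 * k ^ 8 * b + 16896 * b * a ^ 2)) * y4 ^ 3) :
    φ g8 - h8 ∈ I ∧ φ g12 - h12 ∈ I := by
  have hg8u : g8 = relQuadratic (y1 ^ 4) y4 := by rw [hg8, relQuadratic]; ring
  have hg12u : g12 = relCubic (y1 ^ 4) y4 := by rw [hg12, relCubic]; ring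
  have hφu : φ (y1 ^ 4) = C (k ^ 4) * y1 ^ 4 := by rw [map_pow, hφ1, mul_pow, map_pow]
  have hg8I : Ideal.Quotient.mk I g8 = 0 :=
    Ideal.Quotient.eq_zero_iff_mem.mpr (hI ▸ Ideal.subset_span (by simp))
  have hg12I : Ideal.Quotient.mk I g12 = 0 :=
    Ideal.Quotient.eq_zero_iff_mem.mpr (hI ▸ Ideal.subset_span (by simp))
  simp only [← Ideal.Quotient.eq]
  constructor
  · rw [hg8u, map_relQuadratic, hφu, hφ4, relQuadratic_linear_subst, ← hg8u, hh8]
    simp only [map_add, map_sub, map_mul, map_pow, map_ofNat, map_neg, hg8I]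
    ring
  · rw [hg12u, map_relCubic, hφu, hφ4, relCubic_linear_subst, ← hg8u, ← hg12u, hh12]
    simp only [map_add, map_sub, map_mul, map_pow, map_ofNat, map_neg, hg8I, hg12I]
    ring

/-- Residues of `φ(g₈)`, `φ(g₁₂)` modulo the ideal of relations of
`H^*(F₄/C₃·S¹;ℚ)`. -/
theorem F4_C3_residues (k a b : ℚ)
    (y1 y4 g8 g12 h8 h12 : MvPolynomial (Fin 2) ℚ)
    (hy1 : y1 = X 0) (hy4 : y4 = X 1)
    (hg8 : g8 = 24 * y4 ^ 2 + y1 ^ 8 - 12 * y1 ^ 4 * y4)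
    (hg12 : g12 = y1 ^ 12 - 24 * y1 ^ 8 * y4 + 144 * y1 ^ 4 * y4 ^ 2 - 64 * y4 ^ 3)
    (I : Ideal (MvPolynomial (Fin 2) ℚ)) (hI : I = Ideal.span {g8, g12})
    (φ : MvPolynomial (Fin 2) ℚ →ₐ[ℚ] MvPolynomial (Fin 2) ℚ)
    (hφ1 : φ y1 = C k * y1)
    (hφ4 : φ y4 = C a * y1 ^ 4 + C b * y4)
    (hh8 : h8 = C (12 * (24 * a ^ 2 + k ^ 8 - 12 * k ^ 4 * a + 4 * b * a - k ^ 4 * b))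
        * y1 ^ 4 * y4
      + C (12 * (-48 * a ^ 2 + 24 * k ^ 4 * a - 2 * k ^ 8 + 2 * b ^ 2)) * y4 ^ 2)
    (hh12 : h12 = C (-(-1344 * k ^ 4 * b ^ 2 + 1792 * b ^ 2 * a - 832 * k ^ 12
        + 53248 * a ^ 3 - 25344 * k ^ 4 * b * a + 64 * b ^ 3 - 119808 * k ^ 4 * a ^ 2
        + 19968 * k ^ 8 * a + 2112 * k ^ 8 * b + 16896 * b * a ^ 2)) * y4 ^ 3) :
    φ g8 - h8 ∈ I ∧ φ g12 - h12 ∈ I :=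
  F4_C3_residues_general k a b y1 y4 g8 g12 h8 h12 hg8 hg12 I hI φ hφ1 hφ4 hh8 hh12
end

section
/- Let k, a, b ∈ ℚ and let φ : ℚ[y1,y4] → ℚ[y1,y4] be the ℚ-algebra endomorphism with φ(y1) = k*y1 and φ(y4) = a*y1^4 + b*y4. Set h8 = 3*(3*a^2 − k^8 + b^2)*y4^2 + 6*a*b*y1^4*y4 and h12 = (1/5)*(676*a^3 − 130*k^12 + 676*a*b^2 + 1170*a^2*b + 130*b^3)*y4^3. Then φ(g8) − h8 ∈ I and φ(g12) − h12 ∈ I. (These are the residues of φ(g8) and φ(g12) modulo the ideal of relations of H*(F4/B3·S1;ℚ).) -/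
/-! In the quotient by `I` the relations read `y1^8 = 3 y4^2` and `5 y1^12 = 26 y4^3`; they
reduce `φ(g8)` and `5 φ(g12)`, which only involve `y1^4` and `y4`, to the stated normal forms. -/

open MvPolynomial

section Residues

variable {A : Type*} [CommRing A] {y z : A}

theorem residue_g8 (h8 : y ^ 8 = 3 * z ^ 2) (k a b : A) :
    3 * (a * y ^ 4 + b * z) ^ 2 - (k * y) ^ 8 =
      3 * (3 * a ^ 2 - k ^ 8 + b ^ 2) * z ^ 2 + 6 * a * b * y ^ 4 * z := by
  linear_combination (3 * a ^ 2 - k ^ 8) * h8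

theorem five_mul_residue_g12 (h8 : y ^ 8 = 3 * z ^ 2) (h12 : 5 * y ^ 12 = 26 * z ^ 3)
    (k a b : A) :
    5 * (26 * (a * y ^ 4 + b * z) ^ 3 - 5 * (k * y) ^ 12) =
      (676 * a ^ 3 - 130 * k ^ 12 + 676 * a * b ^ 2 + 1170 * a ^ 2 * b + 130 * b ^ 3) * z ^ 3 := by
  linear_combination (26 * a ^ 3 - 5 * k ^ 12 + 26 * a * b ^ 2) * h12 +
    (390 * a ^ 2 * b * z - 130 * a * b ^ 2 * y ^ 4) * h8

end Residues

theorem F4_B3_residues_general (k a b : ℚ)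
    (y1 y4 g8 g12 h8 h12 : MvPolynomial (Fin 2) ℚ)
    (hg8 : g8 = 3 * y4 ^ 2 - y1 ^ 8)
    (hg12 : g12 = 26 * y4 ^ 3 - 5 * y1 ^ 12)
    (I : Ideal (MvPolynomial (Fin 2) ℚ)) (hI : I = Ideal.span {g8, g12})
    (φ : MvPolynomial (Fin 2) ℚ →ₐ[ℚ] MvPolynomial (Fin 2) ℚ)
    (hφ1 : φ y1 = C k * y1)
    (hφ4 : φ y4 = C a * y1 ^ 4 + C b * y4)
    (hh8 : h8 = C (3 * (3 * a ^ 2 - k ^ 8 + b ^ 2)) * y4 ^ 2 + C (6 * a * b) * y1 ^ 4 * y4)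
    (hh12 : h12 = C ((1 / 5) * (676 * a ^ 3 - 130 * k ^ 12 + 676 * a * b ^ 2
        + 1170 * a ^ 2 * b + 130 * b ^ 3)) * y4 ^ 3) :
    φ g8 - h8 ∈ I ∧ φ g12 - h12 ∈ I := by
  let π := Ideal.Quotient.mkₐ ℚ I
  have hC (q : ℚ) : π (C q) = algebraMap ℚ (_ ⧸ I) q := π.commutes q
  have hvanish {p} (hp : p ∈ ({g8, g12} : Set _)) : π p = 0 :=
    Ideal.Quotient.eq_zero_iff_mem.mpr (hI ▸ Ideal.subset_span hp)
  have rel8 : π y1 ^ 8 = 3 * π y4 ^ 2 := by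
    have := hvanish (p := g8) (by simp)
    rw [hg8, map_sub, map_mul, map_pow, map_pow, map_ofNat] at this
    linear_combination -this
  have rel12 : 5 * π y1 ^ 12 = 26 * π y4 ^ 3 := by
    have := hvanish (p := g12) (by simp)
    rw [hg12, map_sub, map_mul, map_mul, map_pow, map_pow, map_ofNat, map_ofNat] at this
    linear_combination -this
  have hπ (p q) : p - q ∈ I ↔ π p = π q := (Ideal.Quotient.mk_eq_mk_iff_sub_mem p q).symm
  rw [hπ, hπ, hg8, hg12, hh8, hh12]
  simp only [map_add, map_sub, map_mul, map_pow, map_ofNat, hφ1, hφ4, hC]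
  constructor
  · exact residue_g8 rel8 _ _ _
  · set r := algebraMap ℚ (_ ⧸ I)
    have h5 : r (1 / 5) * 5 = 1 := by rw [← map_ofNat r, ← map_mul]; norm_num
    linear_combination r (1 / 5) * five_mul_residue_g12 rel8 rel12 (r k) (r a) (r b) -
      (26 * (r a * π y1 ^ 4 + r b * π y4) ^ 3 - 5 * (r k * π y1) ^ 12) * h5

/-- Residues of `φ(g₈)`, `φ(g₁₂)` modulo the ideal of relations of
`H^*(F₄/B₃·S¹;ℚ)`. -/
theorem F4_B3_residues (k a b : ℚ)
    (y1 y4 g8 g12 h8 h12 : MvPolynomial (Fin 2) ℚ)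
    (hy1 : y1 = X 0) (hy4 : y4 = X 1)
    (hg8 : g8 = 3 * y4 ^ 2 - y1 ^ 8)
    (hg12 : g12 = 26 * y4 ^ 3 - 5 * y1 ^ 12)
    (I : Ideal (MvPolynomial (Fin 2) ℚ)) (hI : I = Ideal.span {g8, g12})
    (φ : MvPolynomial (Fin 2) ℚ →ₐ[ℚ] MvPolynomial (Fin 2) ℚ)
    (hφ1 : φ y1 = C k * y1)
    (hφ4 : φ y4 = C a * y1 ^ 4 + C b * y4)
    (hh8 : h8 = C (3 * (3 * a ^ 2 - k ^ 8 + b ^ 2)) * y4 ^ 2 + C (6 * a * b) * y1 ^ 4 * y4)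
    (hh12 : h12 = C ((1 / 5) * (676 * a ^ 3 - 130 * k ^ 12 + 676 * a * b ^ 2
        + 1170 * a ^ 2 * b + 130 * b ^ 3)) * y4 ^ 3) :
    φ g8 - h8 ∈ I ∧ φ g12 - h12 ∈ I :=
  F4_B3_residues_general k a b y1 y4 g8 g12 h8 h12 hg8 hg12 I hI φ hφ1 hφ4 hh8 hh12
end

section
/- Let k, a, b ∈ ℚ and let φ : ℚ[y1,y4] → ℚ[y1,y4] be the ℚ-algebra endomorphism with φ(y1) = k*y1 and φ(y4) = a*y1^4 + b*y4. Set h9 = (3/2)*(−2*k^8 + 6*k^4*a − 3*a^2 + 2*b^2)*k*y1*y4^2 + (3/2)*(4*k^8 − 12*k^4*a + 6*a^2 − 4*k^4*b + 4*a*b)*k*y1^5*y4 and h12 = (1/2)*(−2*a^3 − 2*k^12 + 12*k^4*a^2 − 2*a^2*b + 2*b^3 + 8*k^4*a*b)*y4^3 + (1/2)*(12*a^3 + 12*k^12 − 60*k^4*a*b + 6*a*b^2 − 12*k^4*b^2 − 72*k^4*a^2 + 15*a^2*b)*y1^4*y4^2. Then φ(g9) − h9 ∈ I and φ(g12) − h12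 ∈ I. (These are the residues of φ(g9) and φ(g12) modulo the ideal of relations of H*(E6/D5·S1;ℚ).) -/
/-!
Since `φ` is a ring map, `φ(g₉)` and `φ(g₁₂)` are `g₉`, `g₁₂` evaluated at `k y₁` and
`a y₁⁴ + b y₄`. Dividing these by `g₉, g₁₂` (removing `y₁⁹` with `g₉`, and `y₁¹²`, `y₁⁸ y₄` with
`g₁₂`, `y₁³ g₉`) leaves exactly `h₉` and `h₁₂`; the quotients are
explicit, so both claims are polynomial identities with rational coefficients.
-/

open MvPolynomial

section ResidueIdentities

variable {F : Type*} [Field F] [CharZero F] (k a b y1 y4 : F)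

theorem residue9_identity :
    (2 * (k * y1) ^ 9 + 3 * (k * y1) * (a * y1 ^ 4 + b * y4) ^ 2
        - 6 * (k * y1) ^ 5 * (a * y1 ^ 4 + b * y4))
      - (3 / 2 * (-2 * k ^ 8 + 6 * k ^ 4 * a - 3 * a ^ 2 + 2 * b ^ 2) * k * y1 * y4 ^ 2
        + 3 / 2 * (4 * k ^ 8 - 12 * k ^ 4 * a + 6 * a ^ 2 - 4 * k ^ 4 * b + 4 * a * b) * k
          * y1 ^ 5 * y4)
    = k * (2 * k ^ 8 - 6 * k ^ 4 * a + 3 * a ^ 2) / 2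
      * (2 * y1 ^ 9 + 3 * y1 * y4 ^ 2 - 6 * y1 ^ 5 * y4) := by
  ring

theorem residue12_identity :
    ((a * y1 ^ 4 + b * y4) ^ 3 - 6 * (k * y1) ^ 4 * (a * y1 ^ 4 + b * y4) ^ 2 + (k * y1) ^ 12)
      - (1 / 2 * (-2 * a ^ 3 - 2 * k ^ 12 + 12 * k ^ 4 * a ^ 2 - 2 * a ^ 2 * b + 2 * b ^ 3
          + 8 * k ^ 4 * a * b) * y4 ^ 3
        + 1 / 2 * (12 * a ^ 3 + 12 * k ^ 12 - 60 * k ^ 4 * a * b + 6 * a * b ^ 2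
          - 12 * k ^ 4 * b ^ 2 - 72 * k ^ 4 * a ^ 2 + 15 * a ^ 2 * b) * y1 ^ 4 * y4 ^ 2)
    = a * b * (4 * k ^ 4 - a) / 2 * y1 ^ 3 * (2 * y1 ^ 9 + 3 * y1 * y4 ^ 2 - 6 * y1 ^ 5 * y4)
      + (k ^ 12 - 6 * k ^ 4 * a ^ 2 + a ^ 3 - 4 * k ^ 4 * a * b + a ^ 2 * b)
        * (y4 ^ 3 - 6 * y1 ^ 4 * y4 ^ 2 + y1 ^ 12) := by
  ring

end ResidueIdentities

theorem algebraMap_C_eq_ratCast {σ K : Type*} [Field K] [Algebra (MvPolynomial σ ℚ) K]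
    (q : ℚ) : algebraMap (MvPolynomial σ ℚ) K (C q) = q :=
  eq_ratCast ((algebraMap (MvPolynomial σ ℚ) K).comp C) q

theorem E6_D5_residues_general (k a b : ℚ)
    (y1 y4 g9 g12 h9 h12 : MvPolynomial (Fin 2) ℚ)
    (hg9 : g9 = 2 * y1 ^ 9 + 3 * y1 * y4 ^ 2 - 6 * y1 ^ 5 * y4)
    (hg12 : g12 = y4 ^ 3 - 6 * y1 ^ 4 * y4 ^ 2 + y1 ^ 12)
    (I : Ideal (MvPolynomial (Fin 2) ℚ)) (hI : I = Ideal.span {g9, g12})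
    (φ : MvPolynomial (Fin 2) ℚ →ₐ[ℚ] MvPolynomial (Fin 2) ℚ)
    (hφ1 : φ y1 = C k * y1)
    (hφ4 : φ y4 = C a * y1 ^ 4 + C b * y4)
    (hh9 : h9 = C ((3 / 2) * (-2 * k ^ 8 + 6 * k ^ 4 * a - 3 * a ^ 2 + 2 * b ^ 2) * k)
        * y1 * y4 ^ 2
      + C ((3 / 2) * (4 * k ^ 8 - 12 * k ^ 4 * a + 6 * a ^ 2 - 4 * k ^ 4 * b
        + 4 * a * b) * k) * y1 ^ 5 * y4)
    (hh12 : h12 = C ((1 / 2) * (-2 * a ^ 3 - 2 * k ^ 12 + 12 * k ^ 4 * a ^ 2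
        - 2 * a ^ 2 * b + 2 * b ^ 3 + 8 * k ^ 4 * a * b)) * y4 ^ 3
      + C ((1 / 2) * (12 * a ^ 3 + 12 * k ^ 12 - 60 * k ^ 4 * a * b + 6 * a * b ^ 2
        - 12 * k ^ 4 * b ^ 2 - 72 * k ^ 4 * a ^ 2 + 15 * a ^ 2 * b)) * y1 ^ 4 * y4 ^ 2) :
    φ g9 - h9 ∈ I ∧ φ g12 - h12 ∈ I := by
  subst hI hg9 hg12 hh9 hh12
  -- In the fraction field the coefficients `C q` become casts `(q : K)`, so `ring` can divide by 2.
  let K := FractionRing (MvPolynomial (Fin 2) ℚ)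
  let ι := algebraMap (MvPolynomial (Fin 2) ℚ) K
  have hι : Function.Injective ι := IsFractionRing.injective _ _
  refine ⟨Ideal.mem_span_pair.2 ⟨C (k * (2 * k ^ 8 - 6 * k ^ 4 * a + 3 * a ^ 2) / 2), 0, hι ?_⟩,
    Ideal.mem_span_pair.2 ⟨C (a * b * (4 * k ^ 4 - a) / 2) * y1 ^ 3,
      C (k ^ 12 - 6 * k ^ 4 * a ^ 2 + a ^ 3 - 4 * k ^ 4 * a * b + a ^ 2 * b), hι ?_⟩⟩
  all_goals
    simp only [map_add, map_sub, map_mul, map_pow, map_ofNat, hφ1, hφ4, zero_mul, add_zero,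
      ι, algebraMap_C_eq_ratCast]
    push_cast
  · linear_combination residue9_identity (F := K) k a b (ι y1) (ι y4)
  · linear_combination residue12_identity (F := K) k a b (ι y1) (ι y4)

/-- Residues of `φ(g₉)`, `φ(g₁₂)` modulo the ideal of relations of
`H^*(E₆/D₅·S¹;ℚ)`. -/
theorem E6_D5_residues (k a b : ℚ)
    (y1 y4 g9 g12 h9 h12 : MvPolynomial (Fin 2) ℚ)
    (hy1 : y1 = X 0) (hy4 : y4 = X 1)
    (hg9 : g9 = 2 * y1 ^ 9 + 3 * y1 * y4 ^ 2 - 6 * y1 ^ 5 * y4)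
    (hg12 : g12 = y4 ^ 3 - 6 * y1 ^ 4 * y4 ^ 2 + y1 ^ 12)
    (I : Ideal (MvPolynomial (Fin 2) ℚ)) (hI : I = Ideal.span {g9, g12})
    (φ : MvPolynomial (Fin 2) ℚ →ₐ[ℚ] MvPolynomial (Fin 2) ℚ)
    (hφ1 : φ y1 = C k * y1)
    (hφ4 : φ y4 = C a * y1 ^ 4 + C b * y4)
    (hh9 : h9 = C ((3 / 2) * (-2 * k ^ 8 + 6 * k ^ 4 * a - 3 * a ^ 2 + 2 * b ^ 2) * k)
        * y1 * y4 ^ 2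
      + C ((3 / 2) * (4 * k ^ 8 - 12 * k ^ 4 * a + 6 * a ^ 2 - 4 * k ^ 4 * b
        + 4 * a * b) * k) * y1 ^ 5 * y4)
    (hh12 : h12 = C ((1 / 2) * (-2 * a ^ 3 - 2 * k ^ 12 + 12 * k ^ 4 * a ^ 2
        - 2 * a ^ 2 * b + 2 * b ^ 3 + 8 * k ^ 4 * a * b)) * y4 ^ 3
      + C ((1 / 2) * (12 * a ^ 3 + 12 * k ^ 12 - 60 * k ^ 4 * a * b + 6 * a * b ^ 2
        - 12 * k ^ 4 * b ^ 2 - 72 * k ^ 4 * a ^ 2 + 15 * a ^ 2 * b)) * y1 ^ 4 * y4 ^ 2) :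
    φ g9 - h9 ∈ I ∧ φ g12 - h12 ∈ I :=
  E6_D5_residues_general k a b y1 y4 g9 g12 h9 h12 hg9 hg12 I hI φ hφ1 hφ4 hh9 hh12
end
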